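/- arXiv:1511.00925 — 11 statements merged into one kernel-verified Lean document; each statement's English description precedes it below -/
import Mathlib

section
/- For every integer n ≥ 2 there exist unit-demand valuations for n buyers over m = n goods, each good having supply 1, such that the all-zero price vector is a minimal Walrasian equilibrium price vector and some good g has over-demand OD(g;0) = n − 1. Concretely, fix a distinguished good g*, and let buyer q have values v_q(q) = v_q(g*) = 1 and v_q(h) = 0 for all h ∉ {q, g*}; then p = 0 together with the allocation μ(q) = q is a Walrasian equilibrium with minimal prices, every buyer has g* in her demand correspondence, and hence OD(g*;0) = n − 1. -/
open Finset

noncomputable section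

/-- Utility of an option for a unit-demand buyer: `none` means buying nothing. -/
def utilU {m : ℕ} (v p : Fin m → ℝ) : Option (Fin m) → ℝ
  | none => 0
  | some g => v g - p g

/-- Demand correspondence: the utility-maximizing options at prices `p`. -/
def DemU {m : ℕ} (v p : Fin m → ℝ) : Set (Option (Fin m)) :=
  {o | ∀ o', utilU v p o' ≤ utilU v p o}

/-- Walrasian equilibrium for unit-demand buyers with supplies `s`. -/
def IsWEU {n m : ℕ} (s : Fin m → ℕ) (v : Fin n → Fin m → ℝ)
    (p : Fin m → ℝ) (μ : Fin n → Option (Fin m)) : Prop :=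
  (∀ g, (univ.filter fun q => μ q = some g).card ≤ s g) ∧
  (∀ q, μ q ∈ DemU (v q) p) ∧
  (∀ g, (univ.filter fun q => μ q = some g).card < s g → p g = 0)

/-- `p` is a minimal Walrasian equilibrium price vector. -/
def IsMinimalWEPriceU {n m : ℕ} (s : Fin m → ℕ) (v : Fin n → Fin m → ℝ)
    (p : Fin m → ℝ) : Prop :=
  (∀ g, 0 ≤ p g) ∧ (∃ μ, IsWEU s v p μ) ∧
  ∀ p' : Fin m → ℝ, (∀ g, 0 ≤ p' g) → (∃ μ, IsWEU s v p' μ) → ∀ g, p g ≤ p' g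

/-- Over-demand of good `g`: number of demanders beyond the supply (truncated at 0). -/
def overDemandU {n m : ℕ} (s : Fin m → ℕ) (v : Fin n → Fin m → ℝ)
    (p : Fin m → ℝ) (g : Fin m) : ℕ :=
  Nat.card {q : Fin n // some g ∈ DemU (v q) p} - s g

/-- a market of `n` unit-demand buyers and `n` goods with unit supply,
in which the all-zero price vector is a minimal Walrasian equilibrium price vector
(with allocation `μ q = q`), every buyer demands the distinguished good `g*`,
and the over-demand of `g*` is `n - 1`. -/
theorem stmt0 (n : ℕ) (hn : 2 ≤ n) :
    ∃ (v : Fin n → Fin n → ℝ) (gstar : Fin n),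
      (∀ q g, 0 ≤ v q g) ∧
      (∀ q, v q q = 1 ∧ v q gstar = 1 ∧ ∀ h, h ≠ q → h ≠ gstar → v q h = 0) ∧
      IsWEU (fun _ => 1) v (fun _ => 0) (fun q => some q) ∧
      IsMinimalWEPriceU (fun _ => 1) v (fun _ => 0) ∧
      (∀ q, some gstar ∈ DemU (v q) (fun _ => 0)) ∧
      overDemandU (fun _ => 1) v (fun _ => 0) gstar = n - 1 := by
  have hn0 : 0 < n := by omega
  set gstar : Fin n := ⟨0, hn0⟩ with hgs
  set v : Fin n → Fin n → ℝ := fun q h => if h = q ∨ h = gstar then 1 else 0 with hv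
  have hv01 : ∀ q h, v q h = 0 ∨ v q h = 1 := by
    intro q h; simp only [hv]; split <;> simp
  have hnonneg : ∀ q g, 0 ≤ v q g := by
    intro q g; rcases hv01 q g with h | h <;> simp [h]
  have hdem : ∀ q (o : Option (Fin n)), utilU (v q) (fun _ => 0) o ≤ 1 := by
    intro q o
    cases o with
    | none => simp [utilU]
    | some h => simpa [utilU] using (hv01 q h).elim (fun e => by simp [e]) (fun e => by simp [e])
  have hdemq : ∀ q, some q ∈ DemU (v q) (fun _ => 0) := by
    intro q o'
    have : utilU (v q) (fun _ => 0) (some q) = 1 := by simp [utilU, hv]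
    rw [this]; exact hdem q o'
  have hdemg : ∀ q, some gstar ∈ DemU (v q) (fun _ => 0) := by
    intro q o'
    have : utilU (v q) (fun _ => 0) (some gstar) = 1 := by simp [utilU, hv]
    rw [this]; exact hdem q o'
  have hWE : IsWEU (fun _ => 1) v (fun _ => 0) (fun q => some q) := by
    refine ⟨?_, hdemq, fun _ _ => rfl⟩
    intro g
    have : (univ.filter fun q : Fin n => some q = some g) = {g} := by
      ext q; simp [eq_comm]
    rw [this]; simp
  refine ⟨v, gstar, hnonneg, ?_, hWE, ⟨fun _ => le_refl 0, ⟨_, hWE⟩, fun p' hp' _ g => hp' g⟩,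
    hdemg, ?_⟩
  · intro q
    refine ⟨by simp [hv], by simp [hv], fun h h1 h2 => by simp [hv, h1, h2]⟩
  · have : {q : Fin n // some gstar ∈ DemU (v q) (fun _ => 0)} = {q : Fin n // True} := by
      congr 1; ext q; simp [hdemg q]
    rw [overDemandU, this]
    rw [Nat.card_eq_fintype_card]
    have : Fintype.card {q : Fin n // True} = n := by simpa using (Fintype.card_congr (Equiv.subtypeUnivEquiv (p := fun _ : Fin n => True) (fun _ => trivial)))
    omega

end
end

section
/- Fix n ≥ 2 and a market of n unit-demand buyers and m = n goods, each of supply 1. Draw a permutation σ of {1,…,n} and a distinguished good g* ∈ {1,…,n} independently and uniformly at random, and give buyer q the values v_q(σ(q)) = v_q(g*) = 1 and v_q(h) = 0 for h ∉ {σ(q), g*}. For every realization, the all-zero price vector is a minimal Walrasian equilibrium price vector, and every buyer's demand correspondence at p = 0 consists of goods only (the empty option is never utility-maximizing). Suppose each buyer q selects a good e_q(v_q) ∈ Dem_q(0), where e_q is a deterministic function of her own valuation v_q alone (a tie-breaking rule). Then the expected tie-breaking over-demand of the distinguished good satisfies E_{σ,g*}[ max( |{q : e_q(v_q) = g*}|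 − 1, 0 ) ] = (n − 1)/2. -/
open Finset

noncomputable section

/-- The random valuations: buyer `q` values `σ q` and the distinguished good `gstar`
at `1`, and everything else at `0`. -/
def vVal (n : ℕ) (σ : Equiv.Perm (Fin n)) (gstar : Fin n) (q : Fin n) : Fin n → ℝ :=
  fun h => if h = σ q ∨ h = gstar then 1 else 0

lemma vVal_le_one {n : ℕ} (σ : Equiv.Perm (Fin n)) (gstar q h : Fin n) :
    vVal n σ gstar q h ≤ 1 := by
  unfold vVal; split <;> norm_num

lemma mem_dem_iff {n : ℕ} (σ : Equiv.Perm (Fin n)) (gstar q g : Fin n) :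
    some g ∈ DemU (vVal n σ gstar q) (fun _ => 0) ↔ (g = σ q ∨ g = gstar) := by
  constructor
  · intro h
    have h1 := h (some (σ q))
    have hl : utilU (vVal n σ gstar q) (fun _ => 0) (some (σ q)) = 1 := by
      simp [utilU, vVal]
    have hr : utilU (vVal n σ gstar q) (fun _ => 0) (some g) = vVal n σ gstar q g - 0 := rfl
    rw [hr, hl] at h1
    by_contra hc
    rw [show vVal n σ gstar q g = 0 from if_neg hc] at h1
    norm_num at h1
  · intro hg o'
    have hv : vVal n σ gstar q g = 1 := if_pos hg
    cases o' with
    | none => simp [utilU, hv]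
    | some h => simp only [utilU, hv]; have := vVal_le_one σ gstar q h; linarith

lemma e_mem {n : ℕ} (e : Fin n → (Fin n → ℝ) → Fin n)
    (he : ∀ (σ : Equiv.Perm (Fin n)) (gstar q : Fin n),
      some (e q (vVal n σ gstar q)) ∈ DemU (vVal n σ gstar q) (fun _ => 0))
    (σ : Equiv.Perm (Fin n)) (gstar q : Fin n) :
    e q (vVal n σ gstar q) = σ q ∨ e q (vVal n σ gstar q) = gstar :=
  (mem_dem_iff σ gstar q _).mp (he σ gstar q)

lemma vVal_swap {n : ℕ} (σ : Equiv.Perm (Fin n)) (g q : Fin n) :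
    vVal n (Equiv.swap (σ q) g * σ) (σ q) q = vVal n σ g q := by
  funext h
  simp only [vVal, Equiv.Perm.mul_apply, Equiv.swap_apply_left]
  exact if_congr or_comm rfl rfl

lemma key {n : ℕ} (e : Fin n → (Fin n → ℝ) → Fin n)
    (he : ∀ (σ : Equiv.Perm (Fin n)) (gstar q : Fin n),
      some (e q (vVal n σ gstar q)) ∈ DemU (vVal n σ gstar q) (fun _ => 0))
    (q : Fin n) :
    2 * (univ.filter (fun x : Equiv.Perm (Fin n) × Fin n =>
        x.1 q ≠ x.2 ∧ e q (vVal n x.1 x.2 q) = x.2)).card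
      = Fintype.card (Equiv.Perm (Fin n)) * (n - 1) := by
  classical
  set S := univ.filter (fun x : Equiv.Perm (Fin n) × Fin n =>
      x.1 q ≠ x.2 ∧ e q (vVal n x.1 x.2 q) = x.2) with hS
  set T := univ.filter (fun x : Equiv.Perm (Fin n) × Fin n =>
      x.1 q ≠ x.2 ∧ ¬ e q (vVal n x.1 x.2 q) = x.2) with hT
  set A := univ.filter (fun x : Equiv.Perm (Fin n) × Fin n => x.1 q ≠ x.2) with hA
  have hιι : ∀ x : Equiv.Perm (Fin n) × Fin n,
      (Equiv.swap ((Equiv.swap (x.1 q) x.2 * x.1) q) (x.1 q) * (Equiv.swap (x.1 q) x.2 * x.1),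
        (Equiv.swap (x.1 q) x.2 * x.1) q) = x := by
    intro ⟨σ, g⟩
    have h1 : (Equiv.swap (σ q) g * σ) q = g := by
      simp [Equiv.Perm.mul_apply]
    simp only [h1]
    refine Prod.ext ?_ rfl
    rw [← mul_assoc, Equiv.swap_comm, Equiv.swap_mul_self, one_mul]
  have hST : S.card = T.card := by
    apply Finset.card_bij'
      (fun (x : Equiv.Perm (Fin n) × Fin n) (_ : x ∈ S) => (Equiv.swap (x.1 q) x.2 * x.1, x.1 q))
      (fun (x : Equiv.Perm (Fin n) × Fin n) (_ : x ∈ T) => (Equiv.swap (x.1 q) x.2 * x.1, x.1 q))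
    · rintro ⟨σ, g⟩ hx
      simp only [hS, mem_filter, mem_univ, true_and] at hx
      obtain ⟨hne, hee⟩ := hx
      have h1 : (Equiv.swap (σ q) g * σ) q = g := by simp [Equiv.Perm.mul_apply]
      simp only [hT, mem_filter, mem_univ, true_and, h1]
      constructor
      · exact fun hc => hne hc.symm
      · rw [vVal_swap, hee]; exact fun hc => hne hc.symm
    · rintro ⟨σ, g⟩ hx
      simp only [hT, mem_filter, mem_univ, true_and] at hx
      obtain ⟨hne, hee⟩ := hx
      have hpick : e q (vVal n σ g q) = σ q := (e_mem e he σ g q).resolve_right hee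
      have h1 : (Equiv.swap (σ q) g * σ) q = g := by simp [Equiv.Perm.mul_apply]
      simp only [hS, mem_filter, mem_univ, true_and, h1]
      exact ⟨fun hc => hne hc.symm, by rw [vVal_swap, hpick]⟩
    · intro x _; exact hιι x
    · intro x _; exact hιι x
  have hsum : S.card + T.card = A.card := by
    rw [hS, hT, hA]
    have := Finset.card_filter_add_card_filter_not
      (s := univ.filter (fun x : Equiv.Perm (Fin n) × Fin n => x.1 q ≠ x.2))
      (p := fun x => e q (vVal n x.1 x.2 q) = x.2)
    rw [Finset.filter_filter, Finset.filter_filter] at this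
    exact this
  have hAcard : A.card = Fintype.card (Equiv.Perm (Fin n)) * (n - 1) := by
    rw [hA, Finset.card_filter]
    rw [Fintype.sum_prod_type]
    have hinner : ∀ σ : Equiv.Perm (Fin n),
        (∑ g : Fin n, if σ q ≠ g then 1 else 0) = n - 1 := by
      intro σ
      rw [← Finset.card_filter, Finset.filter_ne, Finset.card_erase_of_mem (mem_univ _),
        Finset.card_univ, Fintype.card_fin]
    rw [Finset.sum_congr rfl (fun σ _ => hinner σ), Finset.sum_const, Finset.card_univ,
      smul_eq_mul]
  omega

/-- drawing `σ` and `gstar` uniformly at random, the all-zero price vector is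
always a minimal Walrasian price vector, the empty option is never demanded, and for any
deterministic tie-breaking rules `e q` (functions of the buyer's own valuation alone,
selecting a good in the buyer's demand correspondence at zero prices) the expected
tie-breaking over-demand of the distinguished good equals `(n-1)/2`. -/
theorem stmt1 (n : ℕ) (hn : 2 ≤ n) (e : Fin n → (Fin n → ℝ) → Fin n)
    (he : ∀ (σ : Equiv.Perm (Fin n)) (gstar q : Fin n),
      some (e q (vVal n σ gstar q)) ∈ DemU (vVal n σ gstar q) (fun _ => 0)) :
    (∀ (σ : Equiv.Perm (Fin n)) (gstar : Fin n),
        IsMinimalWEPriceU (fun _ => 1) (vVal n σ gstar) (fun _ => 0) ∧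
        ∀ q, (none : Option (Fin n)) ∉ DemU (vVal n σ gstar q) (fun _ => 0)) ∧
    (∑ σ : Equiv.Perm (Fin n), ∑ gstar : Fin n,
        max (((univ.filter fun q => e q (vVal n σ gstar q) = gstar).card : ℝ) - 1) 0)
      / ((Fintype.card (Equiv.Perm (Fin n)) : ℝ) * n) = (n - 1) / 2 := by
  classical
  constructor
  · intro σ gstar
    constructor
    · refine ⟨fun g => le_refl 0, ⟨fun q => some (σ q), ?_, ?_, ?_⟩,
        fun p' hp' _ g => hp' g⟩
      · intro g
        have hfil : (univ.filter fun q : Fin n => (some (σ q) : Option (Fin n)) = some g)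
            = {σ.symm g} := by
          ext q
          simp only [mem_filter, mem_univ, true_and, Option.some.injEq, mem_singleton]
          constructor
          · intro h; rw [← h]; simp
          · intro h; rw [h]; simp
        rw [hfil, Finset.card_singleton]
      · intro q; exact (mem_dem_iff σ gstar q (σ q)).mpr (Or.inl rfl)
      · intro g _; rfl
    · intro q hcon
      have h1 := hcon (some (σ q))
      have hl : utilU (vVal n σ gstar q) (fun _ => 0) (some (σ q)) = 1 := by
        simp [utilU, vVal]
      rw [hl] at h1
      norm_num [utilU] at h1
  · -- the expectation computation
    have hstep : ∀ (σ : Equiv.Perm (Fin n)) (g : Fin n),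
        max (((univ.filter fun q => e q (vVal n σ g q) = g).card : ℝ) - 1) 0
          = ((univ.filter fun q : Fin n => σ q ≠ g ∧ e q (vVal n σ g q) = g).card : ℝ) := by
      intro σ g
      set F := univ.filter fun q => e q (vVal n σ g q) = g with hF
      have hmem : σ.symm g ∈ F := by
        simp only [hF, mem_filter, mem_univ, true_and]
        rcases e_mem e he σ g (σ.symm g) with h | h
        · rwa [Equiv.apply_symm_apply] at h
        · exact h
      have herase : univ.filter (fun q : Fin n => σ q ≠ g ∧ e q (vVal n σ g q) = g)
          = F.erase (σ.symm g) := by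
        ext q
        simp only [hF, mem_filter, mem_univ, true_and, mem_erase]
        constructor
        · rintro ⟨h1, h2⟩
          exact ⟨fun hc => h1 (by rw [hc, Equiv.apply_symm_apply]), h2⟩
        · rintro ⟨h1, h2⟩
          refine ⟨fun hc => h1 ?_, h2⟩
          rw [← hc]; simp
      have hpos : 1 ≤ F.card := Finset.card_pos.mpr ⟨_, hmem⟩
      rw [herase, Finset.card_erase_of_mem hmem, Nat.cast_sub hpos, Nat.cast_one]
      rw [max_eq_left]
      have : (1 : ℝ) ≤ (F.card : ℝ) := by exact_mod_cast hpos
      linarith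
    rw [Finset.sum_congr rfl (fun σ _ => Finset.sum_congr rfl (fun g _ => hstep σ g))]
    have hcast : ∀ (σ : Equiv.Perm (Fin n)) (g : Fin n),
        ((univ.filter fun q : Fin n => σ q ≠ g ∧ e q (vVal n σ g q) = g).card : ℝ)
          = ∑ q : Fin n, if σ q ≠ g ∧ e q (vVal n σ g q) = g then (1 : ℝ) else 0 := by
      intro σ g
      rw [Finset.card_filter]
      push_cast
      rfl
    rw [Finset.sum_congr rfl (fun σ _ => Finset.sum_congr rfl (fun g _ => hcast σ g))]
    have h1 : ∀ σ : Equiv.Perm (Fin n),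
        (∑ g : Fin n, ∑ q : Fin n, if σ q ≠ g ∧ e q (vVal n σ g q) = g then (1 : ℝ) else 0)
          = ∑ q : Fin n, ∑ g : Fin n, if σ q ≠ g ∧ e q (vVal n σ g q) = g then (1 : ℝ) else 0 :=
      fun σ => Finset.sum_comm
    rw [Finset.sum_congr rfl (fun σ _ => h1 σ), Finset.sum_comm]
    have hq : ∀ q : Fin n,
        (∑ σ : Equiv.Perm (Fin n), ∑ g : Fin n,
            if σ q ≠ g ∧ e q (vVal n σ g q) = g then (1 : ℝ) else 0)
          = ((univ.filter (fun x : Equiv.Perm (Fin n) × Fin n =>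
              x.1 q ≠ x.2 ∧ e q (vVal n x.1 x.2 q) = x.2)).card : ℝ) := by
      intro q
      rw [Finset.card_filter]
      push_cast
      rw [Fintype.sum_prod_type]
    have hN : (0 : ℝ) < (Fintype.card (Equiv.Perm (Fin n)) : ℝ) := by
      exact_mod_cast Fintype.card_pos
    have hn0 : (0 : ℝ) < (n : ℝ) := by
      have : 0 < n := lt_of_lt_of_le two_pos hn
      exact_mod_cast this
    have hval : ∀ q : Fin n,
        ((univ.filter (fun x : Equiv.Perm (Fin n) × Fin n =>
            x.1 q ≠ x.2 ∧ e q (vVal n x.1 x.2 q) = x.2)).card : ℝ)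
          = (Fintype.card (Equiv.Perm (Fin n)) : ℝ) * ((n : ℝ) - 1) / 2 := by
      intro q
      have hk := key e he q
      have hn1 : (1 : ℕ) ≤ n := le_trans one_le_two hn
      have hc : (2 : ℝ) * ((univ.filter (fun x : Equiv.Perm (Fin n) × Fin n =>
          x.1 q ≠ x.2 ∧ e q (vVal n x.1 x.2 q) = x.2)).card : ℝ)
            = (Fintype.card (Equiv.Perm (Fin n)) : ℝ) * ((n : ℝ) - 1) := by
        have := congrArg (fun k : ℕ => (k : ℝ)) hk
        push_cast [Nat.cast_sub hn1] at this
        simpa using this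
      linarith
    rw [Finset.sum_congr rfl (fun q _ => (hq q).trans (hval q))]
    rw [Finset.sum_const, Finset.card_univ, Fintype.card_fin, nsmul_eq_mul]
    field_simp

end
end

section
/- Fix any finite set of buyers with monotone valuations v_q on bundles (v_q(∅) = 0), and let (p,μ) be a Walrasian equilibrium whose price vector p is a minimal Walrasian price vector. Then for every good g with positive price p_g > 0, the over-demand satisfies OD(g;p) ≥ 1; that is, at least s_g + 1 distinct buyers have g in some bundle of their demand correspondence at p. -/
open Finset

noncomputable section

/-- Quasi-linear utility of a bundle at prices `p`. -/
def utilB {m : ℕ} (v : Finset (Fin m) → ℝ) (p : Fin m → ℝ) (S : Finset (Fin m)) : ℝ :=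
  v S - ∑ g ∈ S, p g

/-- Demand correspondence over bundles: utility-maximizing bundles. -/
def DemB {m : ℕ} (v : Finset (Fin m) → ℝ) (p : Fin m → ℝ) : Set (Finset (Fin m)) :=
  {S | ∀ T, utilB v p T ≤ utilB v p S}

/-- Walrasian equilibrium for buyers with bundle valuations and supplies `s`. -/
def IsWEB {n m : ℕ} (s : Fin m → ℕ) (v : Fin n → Finset (Fin m) → ℝ)
    (p : Fin m → ℝ) (μ : Fin n → Finset (Fin m)) : Prop :=
  (∀ g, (univ.filter fun q => g ∈ μ q).card ≤ s g) ∧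
  (∀ q, μ q ∈ DemB (v q) p) ∧
  (∀ g, (univ.filter fun q => g ∈ μ q).card < s g → p g = 0)

/-- `p` is a minimal Walrasian equilibrium price vector. -/
def IsMinimalWEPriceB {n m : ℕ} (s : Fin m → ℕ) (v : Fin n → Finset (Fin m) → ℝ)
    (p : Fin m → ℝ) : Prop :=
  (∀ g, 0 ≤ p g) ∧ (∃ μ, IsWEB s v p μ) ∧
  ∀ p' : Fin m → ℝ, (∀ g, 0 ≤ p' g) → (∃ μ, IsWEB s v p' μ) → ∀ g, p g ≤ p' g

/-- Utility at prices lowered by `ε` on good `g`. -/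
lemma util_update {m : ℕ} (v : Finset (Fin m) → ℝ) (p : Fin m → ℝ) (g : Fin m) (ε : ℝ)
    (S : Finset (Fin m)) :
    utilB v (Function.update p g (p g - ε)) S = utilB v p S + (if g ∈ S then ε else 0) := by
  unfold utilB
  by_cases hgS : g ∈ S
  · rw [Finset.sum_update_of_mem hgS, if_pos hgS]
    have h1 : S \ {g} = S.erase g := by
      ext x; simp [Finset.mem_erase, and_comm]
    rw [h1, ← Finset.add_sum_erase S p hgS]
    ring
  · rw [if_neg hgS,
      Finset.sum_congr rfl (fun h hh => Function.update_of_ne (by rintro rfl; exact hgS hh) _ p)]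
    ring

/-- at a minimal Walrasian price vector, every good with positive price
has over-demand at least 1, i.e. at least `s g + 1` buyers have `g` in some demanded bundle. -/
theorem stmt2 (n m : ℕ) (s : Fin m → ℕ) (hs : ∀ g, 1 ≤ s g)
    (v : Fin n → Finset (Fin m) → ℝ)
    (hmono : ∀ q, ∀ A B : Finset (Fin m), A ⊆ B → v q A ≤ v q B)
    (hempty : ∀ q, v q ∅ = 0)
    (p : Fin m → ℝ) (μ : Fin n → Finset (Fin m))
    (hWE : IsWEB s v p μ)
    (hmin : IsMinimalWEPriceB s v p)
    (g : Fin m) (hg : 0 < p g) :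
    s g + 1 ≤ Nat.card {q : Fin n // ∃ D ∈ DemB (v q) p, g ∈ D} := by
  classical
  obtain ⟨hsupply, hdem, hzero⟩ := hWE
  obtain ⟨hpnn, -, hminle⟩ := hmin
  set U : Finset (Fin n) := univ.filter (fun q => ∃ D ∈ DemB (v q) p, g ∈ D) with hU
  have hcard : Nat.card {q : Fin n // ∃ D ∈ DemB (v q) p, g ∈ D} = U.card := by
    rw [Nat.card_eq_fintype_card, Fintype.card_subtype]
  rw [hcard]
  by_contra hlt
  push_neg at hlt
  have hUle : U.card ≤ s g := Nat.lt_succ_iff.mp hlt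
  set A : Finset (Fin n) := univ.filter (fun q => g ∈ μ q) with hA
  have hAsub : A ⊆ U := by
    intro q hq
    simp only [hA, hU, mem_filter, mem_univ, true_and] at *
    exact ⟨μ q, hdem q, hq⟩
  have hAcard : A.card = s g := by
    rcases lt_or_eq_of_le (hsupply g) with h | h
    · exact absurd (hzero g h) (ne_of_gt hg)
    · exact h
  have hAU : A = U := Finset.eq_of_subset_of_card_le hAsub (by omega)
  have hmem : ∀ q : Fin n, (∃ D ∈ DemB (v q) p, g ∈ D) ↔ g ∈ μ q := by
    intro q
    constructor
    · intro h
      have hqU : q ∈ U := by simp only [hU, mem_filter, mem_univ, true_and]; exact h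
      rw [← hAU] at hqU
      simpa only [hA, mem_filter, mem_univ, true_and] using hqU
    · intro h; exact ⟨μ q, hdem q, h⟩
  have hn : 0 < n := by
    have hAn : A.Nonempty := Finset.card_pos.mp (by rw [hAcard]; exact hs g)
    obtain ⟨q, -⟩ := hAn
    exact q.pos
  haveI : Nonempty (Fin n) := ⟨⟨0, hn⟩⟩
  set f : Fin n × Finset (Fin m) → ℝ := fun x =>
    if g ∈ x.2 ∧ x.1 ∉ U then utilB (v x.1) p (μ x.1) - utilB (v x.1) p x.2 else p g with hf
  have hne : ((univ : Finset (Fin n × Finset (Fin m))).image f).Nonempty :=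
    Finset.Nonempty.image Finset.univ_nonempty f
  set ε := ((univ : Finset (Fin n × Finset (Fin m))).image f).min' hne with hε
  have hεpos : 0 < ε := by
    rw [hε]
    rw [Finset.lt_min'_iff]
    intro b hb
    obtain ⟨x, -, rfl⟩ := Finset.mem_image.mp hb
    by_cases hc : g ∈ x.2 ∧ x.1 ∉ U
    · simp only [hf, if_pos hc]
      have hlt2 : utilB (v x.1) p x.2 < utilB (v x.1) p (μ x.1) := by
        rcases lt_or_ge (utilB (v x.1) p x.2) (utilB (v x.1) p (μ x.1)) with h | h
        · exact h
        · exfalso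
          apply hc.2
          simp only [hU, mem_filter, mem_univ, true_and]
          exact ⟨x.2, fun T => le_trans (hdem x.1 T) h, hc.1⟩
      linarith
    · simp only [hf, if_neg hc]; exact hg
  have hεle : ε ≤ p g := by
    have hmemf : p g ∈ (univ : Finset (Fin n × Finset (Fin m))).image f := by
      refine Finset.mem_image.mpr ⟨(⟨0, hn⟩, ∅), Finset.mem_univ _, ?_⟩
      simp [hf]
    exact Finset.min'_le _ _ hmemf
  have hgap : ∀ q : Fin n, q ∉ U → ∀ T : Finset (Fin m), g ∈ T →
      utilB (v q) p T + ε ≤ utilB (v q) p (μ q) := by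
    intro q hq T hT
    have hmemf : f (q, T) ∈ (univ : Finset (Fin n × Finset (Fin m))).image f :=
      Finset.mem_image_of_mem f (Finset.mem_univ _)
    have h3 : ε ≤ f (q, T) := Finset.min'_le _ _ hmemf
    have h2 : f (q, T) = utilB (v q) p (μ q) - utilB (v q) p T := by
      simp only [hf]; rw [if_pos ⟨hT, hq⟩]
    rw [h2] at h3
    linarith
  set p' : Fin m → ℝ := Function.update p g (p g - ε / 2) with hp'
  have hp'nn : ∀ h, 0 ≤ p' h := by
    intro h
    by_cases hh : h = g
    · subst hh; rw [hp', Function.update_self]; linarith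
    · rw [hp', Function.update_of_ne hh]; exact hpnn h
  have hWE' : IsWEB s v p' μ := by
    refine ⟨hsupply, ?_, ?_⟩
    · intro q T
      rw [hp', util_update, util_update]
      by_cases hq : g ∈ μ q
      · rw [if_pos hq]
        have h1 : (if g ∈ T then ε / 2 else 0) ≤ ε / 2 := by
          split <;> linarith
        have := hdem q T
        linarith
      · have hqU : q ∉ U := by
          simp only [hU, mem_filter, mem_univ, true_and]
          rw [hmem q]; exact hq
        rw [if_neg hq]
        by_cases hT : g ∈ T
        · rw [if_pos hT]
          have := hgap q hqU T hT
          linarith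
        · rw [if_neg hT]
          have := hdem q T
          linarith
    · intro h hlth
      by_cases hh : h = g
      · subst hh
        exfalso
        rw [← hA, hAcard] at hlth
        omega
      · rw [hp', Function.update_of_ne hh]
        exact hzero h hlth
  have hle := hminle p' hp'nn ⟨μ, hWE'⟩ g
  rw [hp', Function.update_self] at hle
  linarith

end
end

section
/- Suppose the unit-demand buyers' values {v_q(g)} are generic and (p,μ) is a Walrasian equilibrium. Then the swap graph defined with respect to (p,μ) is acyclic: it contains no directed cycle. -/
open Finset

noncomputable section

/-- Value of an option (the value of the good, or `0` for the empty option). -/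
def vOpt {n m : ℕ} (v : Fin n → Fin m → ℝ) (q : Fin n) : Option (Fin m) → ℝ
  | none => 0
  | some g => v q g

/-- Genericity: the values are linearly independent over `{-1,0,1}`. -/
def GenericU {n m : ℕ} (v : Fin n → Fin m → ℝ) : Prop :=
  ∀ α : Fin n → Fin m → ℤ,
    (∀ q g, α q g = -1 ∨ α q g = 0 ∨ α q g = 1) →
    (∑ q, ∑ g, (α q g : ℝ) * v q g) = 0 →
    ∀ q g, α q g = 0

/-- Edge of the swap graph: a directed edge from node `a` to node `b` (nodes are
`some`-goods or the null node `none`), witnessed by a buyer allocated `a` who also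
demands the good `b`.  There are no edges into the null node. -/
def SwapEdgeU {n m : ℕ} (v : Fin n → Fin m → ℝ) (p : Fin m → ℝ)
    (μ : Fin n → Option (Fin m)) (a b : Option (Fin m)) : Prop :=
  ∃ (q : Fin n) (g : Fin m), b = some g ∧ μ q = a ∧ b ∈ DemU (v q) p ∧ a ≠ b

/-!
A directed cycle of the swap graph can be shortened to one without repeated nodes, and all its
nodes are goods since no edge enters `⊥`: `g₀ → g₁ → ⋯ → gₖ → g₀`. The buyer `qᵢ` holding `gᵢ`
also demands `gᵢ₊₁`, so she is indifferent: `v_{qᵢ}(gᵢ) - v_{qᵢ}(gᵢ₊₁) = p(gᵢ) - p(gᵢ₊₁)`.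
Summed around the cycle the prices telescope to `0`. The buyers `qᵢ` are distinct, so this is a
vanishing `{-1, 0, 1}`-combination of the values with coefficient `1` at `(q₀, g₀)`,
contradicting genericity.
-/

open Function

section ClosedWalk

variable {α : Type*} {r : α → α → Prop}

def IsClosedWalk (r : α → α → Prop) (K : ℕ) (c : ℕ → α) : Prop :=
  c K = c 0 ∧ ∀ i < K, r (c i) (c (i + 1))

theorem Relation.TransGen.exists_walk {a b : α} (h : Relation.TransGen r a b) :
    ∃ K, ∃ c : ℕ → α, 0 < K ∧ c 0 = a ∧ c K = b ∧ ∀ i < K, r (c i) (c (i + 1)) := by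
  induction h using Relation.TransGen.head_induction_on with
  | @single a hab =>
    refine ⟨1, fun | 0 => a | _ => b, one_pos, rfl, rfl, ?_⟩
    simpa using hab
  | @head a a' haa' _ ih =>
    obtain ⟨K, c, hK, hc0, hcK, hc⟩ := ih
    refine ⟨K + 1, fun | 0 => a | i + 1 => c i, K.succ_pos, rfl, hcK, ?_⟩
    rintro (_ | i) hi
    · simpa [hc0] using haa'
    · exact hc i (by omega)

theorem Relation.TransGen.exists_isClosedWalk {a : α} (h : Relation.TransGen r a a) :
    ∃ K, 0 < K ∧ ∃ c, IsClosedWalk r K c := by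
  obtain ⟨K, c, hK, hc0, hcK, hc⟩ := h.exists_walk
  exact ⟨K, hK, c, hcK.trans hc0.symm, hc⟩

/-- A repeated vertex splits off a strictly shorter closed walk. -/
theorem IsClosedWalk.injOn_of_minimal {K : ℕ} {c : ℕ → α} (hc : IsClosedWalk r K c)
    (hmin : ∀ K' < K, 0 < K' → ∀ c', ¬ IsClosedWalk r K' c') : Set.InjOn c (Set.Iio K) := by
  intro i hi j (hj : j < K) hij
  by_contra hne
  wlog hlt : i < j generalizing i j
  · exact this hj hi hij.symm (Ne.symm hne) (by omega)
  refine hmin (j - i) (by omega) (by omega) (fun t => c (i + t)) ⟨?_, fun t ht => ?_⟩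
  · simpa [Nat.add_sub_cancel' hlt.le] using hij.symm
  · exact hc.2 (i + t) (by omega)

theorem IsClosedWalk.rel_val_add_one {k : ℕ} {c : ℕ → α} (hc : IsClosedWalk r (k + 1) c)
    (i : Fin (k + 1)) : r (c i) (c ↑(i + 1)) := by
  rw [Fin.val_add_one]
  split_ifs with hi
  · simpa [hi, hc.1] using hc.2 k k.lt_succ_self
  · exact hc.2 i i.isLt

theorem Relation.TransGen.exists_injective_cycle {a : α} (h : Relation.TransGen r a a) :
    ∃ k, ∃ c : Fin (k + 1) → α, Injective c ∧ ∀ i, r (c i) (c (i + 1)) := by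
  classical
  have hex := h.exists_isClosedWalk
  obtain ⟨hK, c, hc⟩ := Nat.find_spec hex
  obtain ⟨k, hk⟩ : ∃ k, Nat.find hex = k + 1 := Nat.exists_eq_succ_of_ne_zero hK.ne'
  have hinj := hc.injOn_of_minimal fun K' hK' hpos c' hc' => Nat.find_min hex hK' ⟨hpos, c', hc'⟩
  rw [hk] at hc hinj
  exact ⟨k, fun i => c i, fun i j hij => Fin.ext (hinj i.isLt j.isLt hij), hc.rel_val_add_one⟩

end ClosedWalk

theorem utilU_eq_of_mem_DemU {m : ℕ} {u p : Fin m → ℝ} {o o' : Option (Fin m)}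
    (ho : o ∈ DemU u p) (ho' : o' ∈ DemU u p) : utilU u p o = utilU u p o' :=
  le_antisymm (ho' o) (ho o')

theorem GenericU.sum_sub_ne_zero {n m : ℕ} {v : Fin n → Fin m → ℝ} (hv : GenericU v)
    {ι : Type*} [Fintype ι] [Nonempty ι] {B : ι → Fin n} (hB : Injective B)
    {G G' : ι → Fin m} (hG : ∀ i, G' i ≠ G i) :
    ∑ i, (v (B i) (G i) - v (B i) (G' i)) ≠ 0 := by
  classical
  -- coefficient `+1` at `(B i, G i)` and `-1` at `(B i, G' i)`: no cancellation, as the `B i` differ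
  set a : ι → Fin m → ℤ := fun i g => (if G i = g then 1 else 0) - if G' i = g then 1 else 0
  set α : Fin n → Fin m → ℤ := extend B a 0
  have hα : ∀ q g, α q g = -1 ∨ α q g = 0 ∨ α q g = 1 := by
    intro q g
    by_cases hq : ∃ i, B i = q
    · obtain ⟨i, rfl⟩ := hq
      simp only [α, hB.extend_apply, a]
      split_ifs <;> simp
    · simp [α, extend_apply' _ _ _ hq]
  have hsum : ∑ q, ∑ g, (α q g : ℝ) * v q g = ∑ i, (v (B i) (G i) - v (B i) (G' i)) := by
    refine (Fintype.sum_of_injective B hB _ _ ?_ fun i => ?_).symm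
    · intro q hq
      simp [α, extend_apply' _ _ _ hq]
    · simp [α, hB.extend_apply, a, sub_mul, ite_mul, Finset.sum_sub_distrib]
  intro hzero
  obtain ⟨i⟩ := ‹Nonempty ι›
  have := hv α hα (hsum.trans hzero) (B i) (G i)
  simp [α, hB.extend_apply, a, hG i] at this

theorem stmt3_general (n m : ℕ) (s : Fin m → ℕ)
    (v : Fin n → Fin m → ℝ) (hgen : GenericU v)
    (p : Fin m → ℝ) (μ : Fin n → Option (Fin m))
    (hWE : IsWEU s v p μ) :
    ∀ x : Option (Fin m), ¬ Relation.TransGen (SwapEdgeU v p μ) x x := by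
  intro x hx
  obtain ⟨k, c, hc, hedge⟩ := hx.exists_injective_cycle
  choose Q G hcG hμQ hdem hne using hedge
  -- buyer `Q (i + 1)` holds `G i` and is indifferent to `G (i + 1)`
  have hB : Injective fun i => Q (i + 1) := fun i j hij =>
    add_right_cancel (hc (by simpa only [hμQ] using congrArg μ hij))
  have hindiff : ∀ i, v (Q (i + 1)) (G i) - v (Q (i + 1)) (G (i + 1)) = p (G i) - p (G (i + 1)) := by
    intro i
    have h := utilU_eq_of_mem_DemU (hWE.2.1 (Q (i + 1))) (hdem (i + 1))
    rw [hμQ, hcG, hcG] at h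
    simp only [utilU] at h
    linarith
  have hGne : ∀ i, G (i + 1) ≠ G i := fun i h => hne (i + 1) (by rw [hcG, hcG, h])
  apply hgen.sum_sub_ne_zero hB hGne
  rw [Fintype.sum_congr _ _ hindiff, Finset.sum_sub_distrib, sub_eq_zero]
  exact (Equiv.sum_comp (Equiv.addRight 1) (p ∘ G)).symm

/-- under generic unit-demand valuations, the swap graph of a Walrasian
equilibrium `(p, μ)` contains no directed cycle. -/
theorem stmt3 (n m : ℕ) (s : Fin m → ℕ) (hs : ∀ g, 1 ≤ s g)
    (v : Fin n → Fin m → ℝ) (hv : ∀ q g, 0 ≤ v q g) (hgen : GenericU v)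
    (p : Fin m → ℝ) (hp : ∀ g, 0 ≤ p g) (μ : Fin n → Option (Fin m))
    (hWE : IsWEU s v p μ) :
    ∀ x : Option (Fin m), ¬ Relation.TransGen (SwapEdgeU v p μ) x x :=
  stmt3_general n m s v hgen p μ hWE

end
end

section
/- Let p be a minimal Walrasian price vector for unit-demand buyers, with equilibrium allocation μ, and consider the associated swap graph. Suppose g_1 → g_2 → … → g_k → g_{k+1} = g is a directed path in the swap graph such that the node g_1 has in-degree 0, witnessed by buyers q_1,…,q_k with μ(q_i) = g_i and g_{i+1} ∈ Dem_{q_i}(p) for i = 1,…,k. Then p_g = ∑_{i=1}^{k} ( v_{q_i}(g_{i+1}) − v_{q_i}(g_i) ), where, if g_1 = ⊥ (buyer q_1 is assigned nothing), one sets v_{q_1}(⊥) = 0. -/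
open Finset

noncomputable section

/-- price of an option -/
def pOpt {m : ℕ} (p : Fin m → ℝ) : Option (Fin m) → ℝ
  | none => 0
  | some g => p g

lemma utilU_eq {n m : ℕ} (v : Fin n → Fin m → ℝ) (r : Fin n) (p : Fin m → ℝ)
    (o : Option (Fin m)) : utilU (v r) p o = vOpt v r o - pOpt p o := by
  cases o <;> simp [utilU, vOpt, pOpt]

lemma utilU_update_ne {m : ℕ} (v p : Fin m → ℝ) (h : Fin m) (c : ℝ)
    (o : Option (Fin m)) (ho : o ≠ some h) :
    utilU v (Function.update p h c) o = utilU v p o := by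
  cases o with
  | none => rfl
  | some g =>
    have : g ≠ h := fun e => ho (by rw [e])
    simp [utilU, Function.update_of_ne this]

/-- Key lemma: a good with in-degree zero in the swap graph has zero minimal price. -/
lemma indeg_zero_price {n m : ℕ} (s : Fin m → ℕ) (v : Fin n → Fin m → ℝ)
    (p : Fin m → ℝ) (μ : Fin n → Option (Fin m))
    (hWE : IsWEU s v p μ) (hmin : IsMinimalWEPriceU s v p) (h : Fin m)
    (hsrc : ∀ x : Option (Fin m), ¬ SwapEdgeU v p μ x (some h)) :
    p h = 0 := by
  classical
  obtain ⟨hcap, hdem, hzero⟩ := hWE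
  by_contra hne
  have hpos : 0 < p h := lt_of_le_of_ne (hmin.1 h) (Ne.symm hne)
  -- every buyer not assigned h strictly prefers her assignment to h
  have hgap : ∀ r : Fin n, μ r ≠ some h →
      utilU (v r) p (some h) < utilU (v r) p (μ r) := by
    intro r hr
    rcases lt_or_eq_of_le (hdem r (some h)) with hlt | heq
    · exact hlt
    · exfalso
      apply hsrc (μ r)
      refine ⟨r, h, rfl, rfl, ?_, hr⟩
      intro o'
      rw [heq]
      exact hdem r o'
  set B : Finset (Fin n) := univ.filter (fun r => μ r ≠ some h) with hB
  set T : Finset ℝ :=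
    insert (p h) (B.image fun r => utilU (v r) p (μ r) - utilU (v r) p (some h)) with hT
  have hTne : T.Nonempty := ⟨p h, mem_insert_self _ _⟩
  set δ : ℝ := T.min' hTne with hδ
  have hδpos : 0 < δ := by
    rw [hδ, Finset.lt_min'_iff]
    intro y hy
    rw [hT, Finset.mem_insert] at hy
    rcases hy with rfl | hy
    · exact hpos
    · obtain ⟨r, hrB, rfl⟩ := Finset.mem_image.1 hy
      rw [hB, Finset.mem_filter] at hrB
      exact sub_pos.2 (hgap r hrB.2)
  have hδle : δ ≤ p h := Finset.min'_le _ _ (mem_insert_self _ _)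
  have hδgap : ∀ r : Fin n, μ r ≠ some h →
      δ ≤ utilU (v r) p (μ r) - utilU (v r) p (some h) := by
    intro r hr
    apply Finset.min'_le
    rw [hT]
    exact Finset.mem_insert_of_mem
      (Finset.mem_image.2 ⟨r, by simp [hB, hr], rfl⟩)
  set p' : Fin m → ℝ := Function.update p h (p h - δ) with hp'
  have hp'h : p' h = p h - δ := by simp [hp']
  have hp'nonneg : ∀ g, 0 ≤ p' g := by
    intro g
    by_cases hg : g = h
    · subst hg; rw [hp'h]; linarith
    · rw [hp', Function.update_of_ne hg]; exact hmin.1 g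
  have hutil_h : ∀ r : Fin n, utilU (v r) p' (some h) = utilU (v r) p (some h) + δ := by
    intro r
    simp [utilU, hp'h]
    ring
  have hWE' : IsWEU s v p' μ := by
    refine ⟨hcap, ?_, ?_⟩
    · intro r o'
      by_cases hr : μ r = some h
      · rw [hr]
        by_cases ho' : o' = some h
        · rw [ho']
        · rw [utilU_update_ne _ _ _ _ _ ho', hutil_h]
          have := hdem r o'
          rw [hr] at this
          linarith
      · rw [utilU_update_ne _ _ _ _ _ hr]
        by_cases ho' : o' = some h
        · rw [ho', hutil_h]
          have := hδgap r hr
          linarith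
        · rw [utilU_update_ne _ _ _ _ _ ho']
          exact hdem r o'
    · intro g hg
      by_cases hgh : g = h
      · subst hgh
        exact absurd (hzero g hg) hne
      · rw [hp', Function.update_of_ne hgh]
        exact hzero g hg
  have := hmin.2.2 p' hp'nonneg ⟨μ, hWE'⟩ h
  rw [hp'h] at this
  linarith


/-- along a directed path `a 0 → a 1 → ⋯ → a k = some g` of the swap graph
starting at a node of in-degree zero, witnessed by buyers `q i` (with `μ (q i) = a i` and
the good `a (i+1)` demanded by `q i`), the minimal Walrasian price of `g` equals the
telescoping sum of value differences (with the value of the null node set to `0`). -/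
theorem stmt4 (n m : ℕ) (s : Fin m → ℕ) (hs : ∀ g, 1 ≤ s g)
    (v : Fin n → Fin m → ℝ) (hv : ∀ q g, 0 ≤ v q g)
    (p : Fin m → ℝ) (μ : Fin n → Option (Fin m))
    (hWE : IsWEU s v p μ) (hmin : IsMinimalWEPriceU s v p)
    (k : ℕ) (hk : 1 ≤ k)
    (a : Fin (k + 1) → Option (Fin m)) (q : Fin k → Fin n)
    (g : Fin m) (hlast : a (Fin.last k) = some g)
    (hsrc : ∀ x : Option (Fin m), ¬ SwapEdgeU v p μ x (a 0))
    (hpath : ∀ i : Fin k, SwapEdgeU v p μ (a i.castSucc) (a i.succ))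
    (hwit : ∀ i : Fin k, μ (q i) = a i.castSucc ∧ a i.succ ∈ DemU (v (q i)) p ∧
      a i.castSucc ≠ a i.succ) :
    p g = ∑ i : Fin k, (vOpt v (q i) (a i.succ) - vOpt v (q i) (a i.castSucc)) := by
  classical
  obtain ⟨hcap, hdem, hzero⟩ := hWE
  -- each summand is a price difference
  have key : ∀ i : Fin k, vOpt v (q i) (a i.succ) - vOpt v (q i) (a i.castSucc)
      = pOpt p (a i.succ) - pOpt p (a i.castSucc) := by
    intro i
    obtain ⟨hμ, hd, _⟩ := hwit i
    have h1 : utilU (v (q i)) p (a i.castSucc) ≤ utilU (v (q i)) p (a i.succ) :=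
      hd (a i.castSucc)
    have h2 : utilU (v (q i)) p (a i.succ) ≤ utilU (v (q i)) p (a i.castSucc) := by
      have := hdem (q i) (a i.succ)
      rwa [hμ] at this
    have heq : utilU (v (q i)) p (a i.succ) = utilU (v (q i)) p (a i.castSucc) :=
      le_antisymm h2 h1
    rw [utilU_eq, utilU_eq] at heq
    linarith
  rw [Finset.sum_congr rfl (fun i _ => key i)]
  -- telescoping
  set F : ℕ → ℝ := fun i => pOpt p (a ⟨min i k, Nat.lt_succ_of_le (min_le_right _ _)⟩)
    with hF
  have htel : ∑ i : Fin k, (pOpt p (a i.succ) - pOpt p (a i.castSucc)) = F k - F 0 := by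
    rw [← Finset.sum_range_sub F, ← Fin.sum_univ_eq_sum_range (fun i => F (i + 1) - F i) k]
    apply Finset.sum_congr rfl
    intro i _
    have e1 : a ⟨min ((i : ℕ) + 1) k, Nat.lt_succ_of_le (min_le_right _ _)⟩ = a i.succ := by
      congr 1
      rw [Fin.ext_iff]
      simp [Nat.min_eq_left i.2]
    have e2 : a ⟨min (i : ℕ) k, Nat.lt_succ_of_le (min_le_right _ _)⟩ = a i.castSucc := by
      congr 1
      rw [Fin.ext_iff]
      simp [Nat.min_eq_left (le_of_lt i.2)]
    simp only [hF, e1, e2]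
  have hFk : F k = p g := by
    have : (⟨min k k, Nat.lt_succ_of_le (min_le_right _ _)⟩ : Fin (k+1)) = Fin.last k :=
      Fin.ext (by simp)
    rw [hF]
    simp only [this, hlast]
    rfl
  have hF0 : F 0 = 0 := by
    have h0 : (⟨min 0 k, Nat.lt_succ_of_le (min_le_right _ _)⟩ : Fin (k+1)) = 0 :=
      Fin.ext (by simp)
    rw [hF]
    simp only [h0]
    cases ha0 : a 0 with
    | none => rfl
    | some h =>
      have : p h = 0 := by
        apply indeg_zero_price s v p μ ⟨hcap, hdem, hzero⟩ hmin h
        rw [← ha0]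
        exact hsrc
      simp [pOpt, this]
  rw [htel, hFk, hF0, sub_zero]

end
end

section
/- Suppose the unit-demand buyers' values {v_q(g)} are generic, p is a minimal Walrasian price vector, and μ is a corresponding equilibrium allocation. Then every node of the swap graph defined with respect to (p,μ) has in-degree at most 1; that is, for every good g there is at most one buyer q with μ(q) ≠ g and g ∈ Dem_q(p). -/
/-!
At an equilibrium a buyer is indifferent between her allocation and every good she demands,
so along a path of the swap graph prices telescope: the total value gain
`∑ (v q g - v q (μ q))` over its edges is the price of its last node minus that of its first.
Minimality of `p` means that no set of positively priced goods can be made cheaper, which forces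
every good to be reachable by a simple swap path from a node of price zero (`⊥` or a free good).
If buyer `q` demands `g`, a simple path to `μ q` followed by the edge `(q, g)` and a fixed simple
path to `g` therefore have equal value gains. On such paths each buyer moves at most once, so the
difference of the gains is a `{-1, 0, 1}`-combination of values, and genericity forces the two
paths to use the same edges. Thus every edge into `g` lies on the fixed path, which enters `g`
only once.
-/

open Finset

noncomputable section

section SwapPaths

variable {n m : ℕ} (v : Fin n → Fin m → ℝ) (p : Fin m → ℝ) (μ : Fin n → Option (Fin m))

def priceOpt (p : Fin m → ℝ) : Option (Fin m) → ℝ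
  | none => 0
  | some g => p g

lemma utilU_eq_vOpt_sub_priceOpt (q : Fin n) (o : Option (Fin m)) :
    utilU (v q) p o = vOpt v q o - priceOpt p o := by
  cases o <;> simp [utilU, vOpt, priceOpt]

/-- Buyer `q` witnesses the swap-graph edge from `μ q` to the good `g`. -/
def IsSwapStep (q : Fin n) (g : Fin m) : Prop :=
  μ q ≠ some g ∧ some g ∈ DemU (v q) p

/-- A walk in the swap graph from `a` to `c`, recorded as the list of its edges
`(buyer, good)`; the edge `(q, g)` leaves the node `μ q`. -/
inductive SwapPath : Option (Fin m) → Option (Fin m) → List (Fin n × Fin m) → Prop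
  | nil (a : Option (Fin m)) : SwapPath a a []
  | cons {q : Fin n} {g : Fin m} {c : Option (Fin m)} {l : List (Fin n × Fin m)} :
      IsSwapStep v p μ q g → SwapPath (some g) c l → SwapPath (μ q) c ((q, g) :: l)

def swapNodes (a : Option (Fin m)) (l : List (Fin n × Fin m)) : List (Option (Fin m)) :=
  a :: l.map (some ∘ Prod.snd)

variable {v p μ}

namespace SwapPath

variable {a b c : Option (Fin m)} {l l' : List (Fin n × Fin m)}

lemma append (h : SwapPath v p μ a b l) (h' : SwapPath v p μ b c l') :
    SwapPath v p μ a c (l ++ l') := by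
  induction h with
  | nil => exact h'
  | cons hst _ ih => exact cons hst (ih h')

lemma isSwapStep_of_mem (h : SwapPath v p μ a c l) {st : Fin n × Fin m} (hst : st ∈ l) :
    IsSwapStep v p μ st.1 st.2 := by
  induction h with
  | nil => simp at hst
  | cons hstep _ ih =>
    rcases List.mem_cons.1 hst with rfl | hst
    exacts [hstep, ih hst]

lemma map_source_append_eq_swapNodes (h : SwapPath v p μ a c l) :
    l.map (μ ∘ Prod.fst) ++ [c] = swapNodes a l := by
  induction h with
  | nil => rfl
  | cons _ _ ih => simpa [swapNodes] using ih

lemma exists_prefix (h : SwapPath v p μ a c l) {x : Option (Fin m)} (hx : x ∈ swapNodes a l) :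
    ∃ l₁, l₁ <+: l ∧ SwapPath v p μ a x l₁ := by
  induction h with
  | nil a =>
    obtain rfl : x = a := by simpa [swapNodes] using hx
    exact ⟨[], List.nil_prefix, nil x⟩
  | @cons q g _ _ hst _ ih =>
    rcases List.mem_cons.1 hx with rfl | hx
    · exact ⟨[], List.nil_prefix, nil _⟩
    · obtain ⟨l₁, hpre, hl₁⟩ := ih (by simpa [swapNodes] using hx)
      exact ⟨(q, g) :: l₁, List.cons_prefix_cons.2 ⟨rfl, hpre⟩, cons hst hl₁⟩

lemma exists_nodup_snoc {q : Fin n} {g : Fin m} (h : SwapPath v p μ a (μ q) l)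
    (hnd : (swapNodes a l).Nodup) (hst : IsSwapStep v p μ q g) :
    ∃ l', SwapPath v p μ a (some g) l' ∧ (swapNodes a l').Nodup := by
  by_cases hg : some g ∈ swapNodes a l
  · obtain ⟨l₁, hpre, hl₁⟩ := h.exists_prefix hg
    refine ⟨l₁, hl₁, hnd.sublist ?_⟩
    exact (List.cons_prefix_cons.2 ⟨rfl, hpre.map _⟩).sublist
  · refine ⟨l ++ [(q, g)], h.append (cons hst (nil _)), ?_⟩
    have : swapNodes a (l ++ [(q, g)]) = swapNodes a l ++ [some g] := by simp [swapNodes]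
    rw [this, List.nodup_append]
    exact ⟨hnd, List.nodup_singleton _, by simpa using fun x hx (hxg : x = some g) => hg (hxg ▸ hx)⟩

lemma sum_gain (hDem : ∀ q, μ q ∈ DemU (v q) p) (h : SwapPath v p μ a c l) :
    (l.map fun st => v st.1 st.2 - vOpt v st.1 (μ st.1)).sum = priceOpt p c - priceOpt p a := by
  induction h with
  | nil => simp
  | @cons q g _ _ hst _ ih =>
    have hind : utilU (v q) p (μ q) = utilU (v q) p (some g) :=
      le_antisymm (hst.2 _) (hDem q _)
    rw [utilU_eq_vOpt_sub_priceOpt, utilU_eq_vOpt_sub_priceOpt] at hind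
    rw [List.map_cons, List.sum_cons, ih]
    change _ = v q g - p g at hind
    change _ + (_ - p g) = _
    linarith

end SwapPath

end SwapPaths

section Genericity

variable {n m : ℕ} {v : Fin n → Fin m → ℝ} {p : Fin m → ℝ} {μ : Fin n → Option (Fin m)}

/-- Coefficients of the value change `v q g - v q (μ q)` caused by the edge `st = (q, g)`. -/
def stepCoef (μ : Fin n → Option (Fin m)) (st : Fin n × Fin m) : Fin n → Fin m → ℤ :=
  fun q g => if q = st.1 then (if g = st.2 then 1 else 0) - (if μ q = some g then 1 else 0) else 0

def pathCoef (μ : Fin n → Option (Fin m)) (l : List (Fin n × Fin m)) : Fin n → Fin m → ℤ :=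
  (l.map (stepCoef μ)).sum

def valuePairing (v : Fin n → Fin m → ℝ) : (Fin n → Fin m → ℤ) →+ ℝ where
  toFun α := ∑ q, ∑ g, (α q g : ℝ) * v q g
  map_zero' := by simp
  map_add' α β := by simp [add_mul, Finset.sum_add_distrib]

lemma valuePairing_stepCoef (st : Fin n × Fin m) :
    valuePairing v (stepCoef μ st) = v st.1 st.2 - vOpt v st.1 (μ st.1) := by
  obtain ⟨q, g⟩ := st
  cases hq : μ q <;>
    simp [valuePairing, stepCoef, hq, vOpt, sub_mul, ite_mul, Finset.sum_sub_distrib]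

lemma valuePairing_pathCoef (l : List (Fin n × Fin m)) :
    valuePairing v (pathCoef μ l) = (l.map fun st => v st.1 st.2 - vOpt v st.1 (μ st.1)).sum := by
  simp [pathCoef, map_list_sum, List.map_map, Function.comp_def, valuePairing_stepCoef]

lemma pathCoef_apply {l : List (Fin n × Fin m)} (hnd : (l.map Prod.fst).Nodup)
    (hl : ∀ st ∈ l, μ st.1 ≠ some st.2) (q : Fin n) (g : Fin m) :
    pathCoef μ l q g =
      if μ q = some g then -(if q ∈ l.map Prod.fst then 1 else 0)
      else if (q, g) ∈ l then 1 else 0 := by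
  induction l with
  | nil => simp [pathCoef]
  | cons st l ih =>
    obtain ⟨q₀, g₀⟩ := st
    simp only [List.map_cons, List.nodup_cons] at hnd
    have ih' := ih hnd.2 fun st hst => hl st (List.mem_cons_of_mem _ hst)
    have hq₀ : μ q₀ ≠ some g₀ := hl _ List.mem_cons_self
    simp only [pathCoef, List.map_cons, List.sum_cons, Pi.add_apply] at ih' ⊢
    rw [ih']
    by_cases hq : q = q₀
    · subst hq
      have : (q, g) ∉ l := fun h => hnd.1 (List.mem_map_of_mem h)
      by_cases hg : g = g₀
      · subst hg; simp [stepCoef, hq₀, this]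
      · by_cases hμ : μ q = some g <;> simp [stepCoef, hg, hμ, this, hnd.1]
    · simp [stepCoef, hq]

lemma GenericU.eq_of_valuePairing_eq (hgen : GenericU v) {α β : Fin n → Fin m → ℤ}
    (hαβ : ∀ q g, |α q g - β q g| ≤ 1) (h : valuePairing v α = valuePairing v β) : α = β := by
  have hzero := hgen (α - β) (fun q g => by have := abs_le.1 (hαβ q g); simp only [Pi.sub_apply]; omega)
    (by simpa [valuePairing, sub_mul] using sub_eq_zero.2 h)
  ext q g
  simpa [sub_eq_zero] using hzero q g

lemma SwapPath.mem_of_mem_of_genericU (hgen : GenericU v) (hDem : ∀ q, μ q ∈ DemU (v q) p)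
    {a₁ a₂ c : Option (Fin m)} {l₁ l₂ : List (Fin n × Fin m)}
    (h₁ : SwapPath v p μ a₁ c l₁) (h₂ : SwapPath v p μ a₂ c l₂)
    (hp : priceOpt p a₁ = priceOpt p a₂)
    (hnd₁ : (l₁.map Prod.fst).Nodup) (hnd₂ : (l₂.map Prod.fst).Nodup)
    {st : Fin n × Fin m} (hst : st ∈ l₁) : st ∈ l₂ := by
  have hl₁ : ∀ st ∈ l₁, μ st.1 ≠ some st.2 := fun st hst => (h₁.isSwapStep_of_mem hst).1
  have hl₂ : ∀ st ∈ l₂, μ st.1 ≠ some st.2 := fun st hst => (h₂.isSwapStep_of_mem hst).1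
  -- each buyer moves at most once on each path, so the coefficients differ by at most one
  have hcoef : pathCoef μ l₁ = pathCoef μ l₂ := by
    refine hgen.eq_of_valuePairing_eq (fun q g => ?_) ?_
    · rw [pathCoef_apply hnd₁ hl₁, pathCoef_apply hnd₂ hl₂]
      split_ifs <;> norm_num
    · rw [valuePairing_pathCoef, valuePairing_pathCoef, h₁.sum_gain hDem, h₂.sum_gain hDem, hp]
  have := congrFun (congrFun hcoef st.1) st.2
  rw [pathCoef_apply hnd₁ hl₁, pathCoef_apply hnd₂ hl₂, if_neg (hl₁ st hst),
    if_neg (hl₁ st hst)] at this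
  simpa [hst] using this

end Genericity

section Minimality

variable {n m : ℕ} {s : Fin m → ℕ} {v : Fin n → Fin m → ℝ} {p : Fin m → ℝ}
  {μ : Fin n → Option (Fin m)}

lemma exists_pos_forall_le_of_pos {ι : Type*} [Finite ι] (P : ι → Prop) (f : ι → ℝ)
    (hf : ∀ i, P i → 0 < f i) : ∃ ε > 0, ∀ i, P i → ε ≤ f i := by
  by_cases hP : Nonempty {i // P i}
  · obtain ⟨i₀, hi₀⟩ := Finite.exists_min fun i : {i // P i} => f i
    exact ⟨f i₀, hf _ i₀.2, fun i hi => hi₀ ⟨i, hi⟩⟩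
  · exact ⟨1, one_pos, fun i hi => (hP ⟨⟨i, hi⟩⟩).elim⟩

def lowerPrices (S : Finset (Fin m)) (ε : ℝ) (p : Fin m → ℝ) : Fin m → ℝ :=
  fun h => if h ∈ S then p h - ε else p h

section LowerPrices

variable (vq : Fin m → ℝ) {S : Finset (Fin m)} {ε : ℝ}

lemma utilU_lowerPrices_some_of_mem {h : Fin m} (hh : h ∈ S) :
    utilU vq (lowerPrices S ε p) (some h) = utilU vq p (some h) + ε := by
  simp [utilU, lowerPrices, hh]; ring

lemma utilU_lowerPrices_of_forall_ne {o : Option (Fin m)} (ho : ∀ h ∈ S, o ≠ some h) :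
    utilU vq (lowerPrices S ε p) o = utilU vq p o := by
  cases o with
  | none => rfl
  | some h =>
    have hh : h ∉ S := fun hh => ho h hh rfl
    simp [utilU, lowerPrices, hh]

lemma utilU_lowerPrices_le (hε : 0 ≤ ε) (o : Option (Fin m)) :
    utilU vq (lowerPrices S ε p) o ≤ utilU vq p o + ε := by
  by_cases ho : ∃ h ∈ S, o = some h
  · obtain ⟨h, hh, rfl⟩ := ho
    exact (utilU_lowerPrices_some_of_mem vq hh).le
  · push Not at ho
    rw [utilU_lowerPrices_of_forall_ne vq ho]
    linarith

end LowerPrices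

lemma IsWEU.lowerPrices (hWE : IsWEU s v p μ) {S : Finset (Fin m)} {ε : ℝ} (hε : 0 ≤ ε)
    (hpos : ∀ h ∈ S, 0 < p h)
    (hgap : ∀ q, (∀ h ∈ S, μ q ≠ some h) → ∀ h ∈ S,
      utilU (v q) p (some h) + ε ≤ utilU (v q) p (μ q)) :
    IsWEU s v (lowerPrices S ε p) μ := by
  refine ⟨hWE.1, fun q o => ?_, fun h hh => ?_⟩
  · by_cases hout : ∀ h ∈ S, μ q ≠ some h
    · rw [utilU_lowerPrices_of_forall_ne _ hout]
      by_cases ho : ∃ h ∈ S, o = some h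
      · obtain ⟨h, hh, rfl⟩ := ho
        rw [utilU_lowerPrices_some_of_mem _ hh]
        exact hgap q hout h hh
      · push Not at ho
        rw [utilU_lowerPrices_of_forall_ne _ ho]
        exact hWE.2.1 q o
    · push Not at hout
      obtain ⟨h, hh, hμ⟩ := hout
      rw [hμ, utilU_lowerPrices_some_of_mem _ hh, ← hμ]
      linarith [utilU_lowerPrices_le (v q) (S := S) (p := p) hε o, hWE.2.1 q o]
  · have h0 := hWE.2.2 h hh
    have hS : h ∉ S := fun hS => (hpos h hS).ne' h0
    simpa [_root_.lowerPrices, hS] using h0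

lemma IsMinimalWEPriceU.exists_isSwapStep_into (hmin : IsMinimalWEPriceU s v p)
    (hWE : IsWEU s v p μ) {S : Finset (Fin m)} (hS : S.Nonempty) (hpos : ∀ h ∈ S, 0 < p h) :
    ∃ q, ∃ h ∈ S, (∀ h' ∈ S, μ q ≠ some h') ∧ some h ∈ DemU (v q) p := by
  by_contra hcon
  push Not at hcon
  have hgap : ∀ q, (∀ h ∈ S, μ q ≠ some h) → ∀ h ∈ S,
      0 < utilU (v q) p (μ q) - utilU (v q) p (some h) := by
    intro q hout h hh
    refine sub_pos.2 (lt_of_le_of_ne (hWE.2.1 q _) fun heq => hcon q h hh hout fun o => ?_)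
    exact heq ▸ hWE.2.1 q o
  obtain ⟨ε₁, hε₁, hε₁p⟩ := exists_pos_forall_le_of_pos (· ∈ S) p hpos
  obtain ⟨ε₂, hε₂, hε₂gap⟩ := exists_pos_forall_le_of_pos
    (fun qh : Fin n × Fin m => (∀ h ∈ S, μ qh.1 ≠ some h) ∧ qh.2 ∈ S)
    (fun qh => utilU (v qh.1) p (μ qh.1) - utilU (v qh.1) p (some qh.2))
    fun qh hqh => hgap qh.1 hqh.1 qh.2 hqh.2
  set ε := min ε₁ ε₂
  have hWE' : IsWEU s v (lowerPrices S ε p) μ :=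
    hWE.lowerPrices (by positivity) hpos fun q hout h hh => by
      linarith [min_le_right ε₁ ε₂, hε₂gap (q, h) ⟨hout, hh⟩]
  have hnonneg : ∀ h, 0 ≤ lowerPrices S ε p h := by
    intro h
    by_cases hh : h ∈ S
    · simp only [lowerPrices, hh, if_true]
      linarith [min_le_left ε₁ ε₂, hε₁p h hh]
    · simpa [lowerPrices, hh] using hmin.1 h
  obtain ⟨h₀, hh₀⟩ := hS
  have := hmin.2.2 _ hnonneg ⟨μ, hWE'⟩ h₀
  simp only [lowerPrices, hh₀, if_true] at this
  linarith [lt_min hε₁ hε₂]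

end Minimality

section Reachability

variable {n m : ℕ} {s : Fin m → ℕ} {v : Fin n → Fin m → ℝ} {p : Fin m → ℝ}
  {μ : Fin n → Option (Fin m)}

lemma SwapPath.nodup_fst {a c : Option (Fin m)} {l : List (Fin n × Fin m)}
    (h : SwapPath v p μ a c l) (hnd : (swapNodes a l).Nodup) : (l.map Prod.fst).Nodup := by
  rw [← h.map_source_append_eq_swapNodes, ← List.map_map] at hnd
  exact (List.nodup_append.1 hnd).1.of_map μ

lemma IsMinimalWEPriceU.exists_nodup_swapPath (hmin : IsMinimalWEPriceU s v p)
    (hWE : IsWEU s v p μ) (c : Option (Fin m)) :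
    ∃ o l, priceOpt p o = 0 ∧ SwapPath v p μ o c l ∧ (swapNodes o l).Nodup := by
  set R : Option (Fin m) → Prop :=
    fun c => ∃ o l, priceOpt p o = 0 ∧ SwapPath v p μ o c l ∧ (swapNodes o l).Nodup
  have hzero : ∀ c, priceOpt p c = 0 → R c :=
    fun c hc => ⟨c, [], hc, .nil c, by simp [swapNodes]⟩
  suffices hgoods : ∀ h, R (some h) by
    cases c
    exacts [hzero none rfl, hgoods _]
  by_contra! hT
  obtain ⟨h₀, hh₀⟩ := hT
  classical
  set T := univ.filter fun h => ¬ R (some h)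
  have hTpos : ∀ h ∈ T, 0 < p h := fun h hh =>
    (hmin.1 h).lt_of_ne fun h0 => (mem_filter.1 hh).2 (hzero _ h0.symm)
  obtain ⟨q, b, hb, hout, hdem⟩ :=
    hmin.exists_isSwapStep_into hWE ⟨h₀, mem_filter.2 ⟨mem_univ _, hh₀⟩⟩ hTpos
  have hq : R (μ q) := by
    cases hμ : μ q with
    | none => exact hzero none rfl
    | some h =>
      by_contra hR
      exact hout h (mem_filter.2 ⟨mem_univ _, hR⟩) hμ
  obtain ⟨o, l, ho, hl, hnd⟩ := hq
  obtain ⟨l', hl', hnd'⟩ := hl.exists_nodup_snoc hnd ⟨hout b hb, hdem⟩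
  exact (mem_filter.1 hb).2 ⟨o, l', ho, hl', hnd'⟩

/-- Compare `l` with a simple path to `μ q` extended by the edge `(q, g)`. -/
lemma IsMinimalWEPriceU.mem_of_isSwapStep (hmin : IsMinimalWEPriceU s v p)
    (hWE : IsWEU s v p μ) (hgen : GenericU v) {o : Option (Fin m)} {l : List (Fin n × Fin m)}
    {g : Fin m} (ho : priceOpt p o = 0) (hl : SwapPath v p μ o (some g) l)
    (hnd : (swapNodes o l).Nodup) {q : Fin n} (hq : IsSwapStep v p μ q g) : (q, g) ∈ l := by
  obtain ⟨o', l', ho', hl', hnd'⟩ := hmin.exists_nodup_swapPath hWE (μ q)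
  have hfst : ((l' ++ [(q, g)]).map Prod.fst).Nodup := by
    rw [← hl'.map_source_append_eq_swapNodes, ← List.map_map] at hnd'
    refine List.Nodup.of_map μ ?_
    simpa using hnd'
  exact (hl'.append (.cons hq (.nil _))).mem_of_mem_of_genericU hgen hWE.2.1 hl (ho'.trans ho.symm)
    hfst (hl.nodup_fst hnd) (by simp)

end Reachability

theorem stmt5_general (n m : ℕ) (s : Fin m → ℕ)
    (v : Fin n → Fin m → ℝ) (hgen : GenericU v)
    (p : Fin m → ℝ) (μ : Fin n → Option (Fin m))
    (hWE : IsWEU s v p μ) (hmin : IsMinimalWEPriceU s v p) :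
    ∀ g : Fin m, ∀ q1 q2 : Fin n,
      μ q1 ≠ some g → some g ∈ DemU (v q1) p →
      μ q2 ≠ some g → some g ∈ DemU (v q2) p → q1 = q2 := by
  intro g q1 q2 hμ1 hd1 hμ2 hd2
  obtain ⟨o, l, ho, hl, hnd⟩ := hmin.exists_nodup_swapPath hWE (some g)
  have h1 := hmin.mem_of_isSwapStep hWE hgen ho hl hnd ⟨hμ1, hd1⟩
  have h2 := hmin.mem_of_isSwapStep hWE hgen ho hl hnd ⟨hμ2, hd2⟩
  have htargets : (l.map Prod.snd).Nodup := by
    rw [swapNodes, List.nodup_cons, ← List.map_map] at hnd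
    exact hnd.2.of_map some
  exact congrArg Prod.fst (List.inj_on_of_nodup_map htargets h1 h2 rfl)

/-- under generic unit-demand valuations, at a minimal Walrasian price
vector `p` with equilibrium allocation `μ`, every node of the swap graph has in-degree
at most one: for each good `g` there is at most one buyer not allocated `g` who demands `g`. -/
theorem stmt5 (n m : ℕ) (s : Fin m → ℕ) (hs : ∀ g, 1 ≤ s g)
    (v : Fin n → Fin m → ℝ) (hv : ∀ q g, 0 ≤ v q g) (hgen : GenericU v)
    (p : Fin m → ℝ) (μ : Fin n → Option (Fin m))
    (hWE : IsWEU s v p μ) (hmin : IsMinimalWEPriceU s v p) :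
    ∀ g : Fin m, ∀ q1 q2 : Fin n,
      μ q1 ≠ some g → some g ∈ DemU (v q1) p →
      μ q2 ≠ some g → some g ∈ DemU (v q2) p → q1 = q2 :=
  stmt5_general n m s v hgen p μ hWE hmin

end
end

section
/- Let v be a monotone valuation on bundles of m goods with v(∅) = 0 satisfying gross substitutes, and let p ∈ (ℝ≥0)^m be any price vector. Then any two minimum demand bundles at p have the same cardinality: if B, B' ∈ D*(p), then |B| = |B'|. -/
open Finset

noncomputable section

/-- The gross substitutes condition. -/
def GrossSubstitutes {m : ℕ} (v : Finset (Fin m) → ℝ) : Prop :=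
  ∀ p p' : Fin m → ℝ, (∀ g, 0 ≤ p g) → (∀ g, p g ≤ p' g) →
    ∀ S ∈ DemB v p, ∃ S' ∈ DemB v p', ∀ g ∈ S, p g = p' g → g ∈ S'

/-- Minimum demand correspondence: demanded bundles no proper subset of which is demanded. -/
def DstarB {m : ℕ} (v : Finset (Fin m) → ℝ) (p : Fin m → ℝ) : Set (Finset (Fin m)) :=
  {S | S ∈ DemB v p ∧ ∀ T ⊂ S, T ∉ DemB v p}

lemma sum_ite_notmem_aux {m : ℕ} (F S : Finset (Fin m)) :
    ∑ g ∈ S, (if g ∈ F then (0:ℝ) else 1) = ((S \ F).card : ℝ) := by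
  classical
  rw [Finset.sdiff_eq_filter]
  rw [Finset.sum_ite, Finset.sum_const, Finset.sum_const]
  simp

lemma utilB_shift {m : ℕ} (v : Finset (Fin m) → ℝ) (p : Fin m → ℝ) (ε : ℝ)
    (F S : Finset (Fin m)) :
    utilB v (fun g => p g + ε * (if g ∈ F then 0 else 1)) S
      = utilB v p S - ε * ((S \ F).card : ℝ) := by
  unfold utilB
  rw [Finset.sum_add_distrib, ← Finset.mul_sum, sum_ite_notmem_aux]
  ring

/-- Key lemma: a minimal demanded bundle has minimum cardinality among demanded bundles. -/
lemma dstar_card_min {m : ℕ} (v : Finset (Fin m) → ℝ) (hGS : GrossSubstitutes v)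
    (p : Fin m → ℝ) (hp : ∀ g, 0 ≤ p g)
    (B : Finset (Fin m)) (hB : B ∈ DstarB v p) :
    ∀ U ∈ DemB v p, B.card ≤ U.card := by
  classical
  obtain ⟨hBdem', hBmin⟩ := hB
  have hBdem : ∀ T, utilB v p T ≤ utilB v p B := hBdem'
  -- the minimum positive gap between utility values
  set gaps : Finset ℝ := ((Finset.univ ×ˢ Finset.univ :
      Finset (Finset (Fin m) × Finset (Fin m))).filter
      (fun q => utilB v p q.2 < utilB v p q.1)).image
      (fun q => utilB v p q.1 - utilB v p q.2) with hgapsdef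
  have hgapmem : ∀ S T : Finset (Fin m), utilB v p T < utilB v p S →
      (utilB v p S - utilB v p T) ∈ gaps := by
    intro S T h
    exact Finset.mem_image.mpr ⟨(S, T), Finset.mem_filter.mpr
      ⟨Finset.mem_product.mpr ⟨Finset.mem_univ _, Finset.mem_univ _⟩, h⟩, rfl⟩
  have hgaps_pos : ∀ r ∈ gaps, 0 < r := by
    intro r hr
    obtain ⟨qq, hq, rfl⟩ := Finset.mem_image.mp hr
    have := (Finset.mem_filter.mp hq).2
    linarith
  obtain ⟨gap, hgap_pos, hgap_le⟩ : ∃ gap : ℝ, 0 < gap ∧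
      ∀ S T, utilB v p T < utilB v p S → gap ≤ utilB v p S - utilB v p T := by
    by_cases h : gaps.Nonempty
    · exact ⟨gaps.min' h, hgaps_pos _ (Finset.min'_mem _ _),
        fun S T hlt => Finset.min'_le _ _ (hgapmem S T hlt)⟩
    · exact ⟨1, one_pos, fun S T hlt => absurd ⟨_, hgapmem S T hlt⟩ h⟩
  set ε := gap / (m + 2) with hεdef
  have hε : 0 < ε := div_pos hgap_pos (by positivity)
  have hεgap : ε * ((m : ℝ) + 2) = gap := div_mul_cancel₀ _ (by positivity)
  have hεexp : ε * ((m : ℝ) + 2) = ε * (m : ℝ) + 2 * ε := by ring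
  have hcard_le : ∀ S : Finset (Fin m), ((S.card : ℝ)) ≤ (m : ℝ) := by
    intro S
    have h1 : S.card ≤ m := by
      have := Finset.card_le_univ S
      simpa using this
    exact_mod_cast h1
  -- main induction
  have main : ∀ n : ℕ, ∀ free : Finset (Fin m), free.card ≤ n → free ⊆ B →
      (∀ U ∈ DemB v p, (B \ free).card ≤ (U \ free).card) →
      ∀ U ∈ DemB v p, B.card ≤ U.card := by
    intro n
    induction n with
    | zero =>
      intro free hc _ hQ
      have hfe : free = ∅ := Finset.card_eq_zero.mp (Nat.le_zero.mp hc)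
      subst hfe
      simpa using hQ
    | succ n ih =>
      intro free hc hsub hQ
      rcases Finset.eq_empty_or_nonempty free with rfl | ⟨x, hx⟩
      · simpa using hQ
      by_cases hQ' : ∀ U ∈ DemB v p, (B \ free.erase x).card ≤ (U \ free.erase x).card
      · exact ih (free.erase x)
          (by rw [Finset.card_erase_of_mem hx]; omega)
          ((Finset.erase_subset _ _).trans hsub) hQ'
      -- contradiction block
      exfalso
      push_neg at hQ'
      obtain ⟨U₀, hU₀dem', hU₀lt⟩ := hQ'
      have hU₀dem : ∀ T, utilB v p T ≤ utilB v p U₀ := hU₀dem'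
      have hxB : x ∈ B := hsub hx
      have hBsplit : B \ free.erase x = insert x (B \ free) := by
        ext g
        simp only [Finset.mem_sdiff, Finset.mem_erase, Finset.mem_insert]
        constructor
        · rintro ⟨hgB, hg⟩
          by_cases hgx : g = x
          · exact Or.inl hgx
          · exact Or.inr ⟨hgB, fun hgf => hg ⟨hgx, hgf⟩⟩
        · rintro (rfl | ⟨hgB, hgf⟩)
          · exact ⟨hxB, fun h => h.1 rfl⟩
          · exact ⟨hgB, fun h => hgf h.2⟩
      have hxnot : x ∉ B \ free := by simp [Finset.mem_sdiff, hx]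
      have hcard' : (B \ free.erase x).card = (B \ free).card + 1 := by
        rw [hBsplit, Finset.card_insert_of_notMem hxnot]
      -- facts about U₀
      have hU₀a : (U₀ \ free.erase x).card ≤ (B \ free).card := by omega
      have hU₀b : (B \ free).card ≤ (U₀ \ free).card := hQ U₀ hU₀dem'
      have hU₀c : U₀ \ free ⊆ U₀ \ free.erase x :=
        Finset.sdiff_subset_sdiff (Finset.Subset.refl _) (Finset.erase_subset _ _)
      have hU₀card : (U₀ \ free.erase x).card = (B \ free).card :=
        le_antisymm hU₀a (hU₀b.trans (Finset.card_le_card hU₀c))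
      have hU₀u : utilB v p U₀ = utilB v p B := le_antisymm (hBdem U₀) (hU₀dem B)
      -- prices
      have hq0 : ∀ g, 0 ≤ p g + ε * (if g ∈ free then 0 else 1) := by
        intro g
        have := hp g
        split <;> nlinarith [hε.le]
      have hqle : ∀ g, p g + ε * (if g ∈ free then 0 else 1)
          ≤ p g + ε * (if g ∈ free.erase x then 0 else 1) := by
        intro g
        by_cases h1 : g ∈ free.erase x
        · rw [if_pos h1, if_pos (Finset.mem_of_mem_erase h1)]
        · rw [if_neg h1]
          by_cases h2 : g ∈ free
          · rw [if_pos h2]; nlinarith [hε.le]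
          · rw [if_neg h2]
      have hqeq : ∀ g, g ≠ x → p g + ε * (if g ∈ free then 0 else 1)
          = p g + ε * (if g ∈ free.erase x then 0 else 1) := by
        intro g hg
        have hiff : g ∈ free ↔ g ∈ free.erase x := by
          simp [Finset.mem_erase, hg]
        by_cases h2 : g ∈ free
        · rw [if_pos h2, if_pos (hiff.mp h2)]
        · rw [if_neg h2, if_neg (fun hcc => h2 (hiff.mpr hcc))]
      -- B is demanded at q
      have hBq : B ∈ DemB v (fun g => p g + ε * (if g ∈ free then 0 else 1)) := by
        intro T
        rw [utilB_shift, utilB_shift]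
        by_cases hT : T ∈ DemB v p
        · have hTd : ∀ T', utilB v p T' ≤ utilB v p T := hT
          have h1 : utilB v p T = utilB v p B := le_antisymm (hBdem T) (hTd B)
          have h2 : ((B \ free).card : ℝ) ≤ ((T \ free).card : ℝ) := by
            exact_mod_cast hQ T hT
          have h3 : ε * ((B \ free).card : ℝ) ≤ ε * ((T \ free).card : ℝ) :=
            mul_le_mul_of_nonneg_left h2 hε.le
          linarith
        · have hTlt : utilB v p T < utilB v p B := by
            by_contra hle
            push_neg at hle
            exact hT (fun T' => (hBdem T').trans hle)
          have hg := hgap_le B T hTlt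
          have e1 : ε * ((B \ free).card : ℝ) ≤ ε * (m : ℝ) :=
            mul_le_mul_of_nonneg_left (hcard_le _) hε.le
          have e2 : (0:ℝ) ≤ ε * ((T \ free).card : ℝ) :=
            mul_nonneg hε.le (Nat.cast_nonneg _)
          linarith
      -- apply GS
      obtain ⟨U', hU'dem, hcont⟩ := hGS
        (fun g => p g + ε * (if g ∈ free then 0 else 1))
        (fun g => p g + ε * (if g ∈ free.erase x then 0 else 1))
        hq0 hqle B hBq
      have hBsub : ∀ g ∈ B, g ≠ x → g ∈ U' := fun g hg hgx => hcont g hg (hqeq g hgx)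
      have hcomp : utilB v (fun g => p g + ε * (if g ∈ free.erase x then 0 else 1)) U₀
          ≤ utilB v (fun g => p g + ε * (if g ∈ free.erase x then 0 else 1)) U' := hU'dem U₀
      rw [utilB_shift, utilB_shift] at hcomp
      -- U' is demanded at p
      have hU'u : utilB v p U' = utilB v p B := by
        refine le_antisymm (hBdem U') ?_
        by_contra hne
        push_neg at hne
        have hg := hgap_le B U' hne
        have e1 : ε * ((U₀ \ free.erase x).card : ℝ) ≤ ε * (m : ℝ) :=
          mul_le_mul_of_nonneg_left (hcard_le _) hε.le
        have e2 : (0:ℝ) ≤ ε * ((U' \ free.erase x).card : ℝ) :=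
          mul_nonneg hε.le (Nat.cast_nonneg _)
        linarith
      have hU'dem_p : U' ∈ DemB v p := by
        intro T
        calc utilB v p T ≤ utilB v p B := hBdem T
        _ = utilB v p U' := hU'u.symm
      -- card bound for U'
      have hcU'_le : (U' \ free.erase x).card ≤ (B \ free).card := by
        have h1 : ε * ((U' \ free.erase x).card : ℝ)
            ≤ ε * ((U₀ \ free.erase x).card : ℝ) := by linarith
        have h2 : ((U' \ free.erase x).card : ℝ) ≤ ((U₀ \ free.erase x).card : ℝ) :=
          le_of_mul_le_mul_left h1 hε
        have h3 : (U' \ free.erase x).card ≤ (U₀ \ free.erase x).card := by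
          exact_mod_cast h2
        omega
      -- x ∉ U'
      have hxU' : x ∉ U' := by
        intro hxU'
        have hsubBU : B \ free.erase x ⊆ U' \ free.erase x := by
          intro g hg
          rw [Finset.mem_sdiff] at hg ⊢
          refine ⟨?_, hg.2⟩
          by_cases hgx : g = x
          · rwa [hgx]
          · exact hBsub g hg.1 hgx
        have := Finset.card_le_card hsubBU
        omega
      -- U' \ free = B \ free hence U' ⊊ B
      have hsubBU2 : B \ free ⊆ U' \ free := by
        intro g hg
        rw [Finset.mem_sdiff] at hg ⊢
        have hgx : g ≠ x := fun h => hg.2 (h ▸ hx)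
        exact ⟨hBsub g hg.1 hgx, hg.2⟩
      have hmono2 : U' \ free ⊆ U' \ free.erase x :=
        Finset.sdiff_subset_sdiff (Finset.Subset.refl _) (Finset.erase_subset _ _)
      have hEq : B \ free = U' \ free :=
        Finset.eq_of_subset_of_card_le hsubBU2
          (le_trans (Finset.card_le_card hmono2) hcU'_le)
      have hU'B : U' ⊆ B := by
        intro g hg
        by_cases hgf : g ∈ free
        · exact hsub hgf
        · have hmem : g ∈ U' \ free := Finset.mem_sdiff.mpr ⟨hg, hgf⟩
          rw [← hEq] at hmem
          exact (Finset.mem_sdiff.mp hmem).1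
      have hss : U' ⊂ B :=
        Finset.ssubset_iff_subset_ne.mpr ⟨hU'B, fun h => hxU' (h ▸ hxB)⟩
      exact hBmin U' hss hU'dem_p
  exact main B.card B le_rfl (Finset.Subset.refl _) (by simp)

/-- for a monotone gross substitutes valuation, any two minimum demand
bundles at a (nonnegative) price vector have the same cardinality. -/
theorem stmt10 (m : ℕ) (v : Finset (Fin m) → ℝ)
    (hmono : ∀ A B : Finset (Fin m), A ⊆ B → v A ≤ v B)
    (hempty : v ∅ = 0) (hGS : GrossSubstitutes v)
    (p : Fin m → ℝ) (hp : ∀ g, 0 ≤ p g)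
    (B B' : Finset (Fin m)) (hB : B ∈ DstarB v p) (hB' : B' ∈ DstarB v p) :
    B.card = B'.card := by
  exact le_antisymm (dstar_card_min v hGS p hp B hB B' hB'.1)
    (dstar_card_min v hGS p hp B' hB' B hB.1)

end
end

section
/- Let v be a monotone valuation on bundles of m goods with v(∅) = 0 satisfying gross substitutes, and let p ∈ (ℝ≥0)^m be any price vector. Then the minimum demand correspondence D*(p) is the set of bases of a matroid: there exists a matroid on the ground set {1,…,m} whose set of bases is exactly D*(p). -/
/-
Gross substitutes survives restricting the available goods: pricing everything outside a set `D`
above `v univ` turns demand into demand among the subsets of `D`, and GS then says that shrinking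
`D` or raising prices keeps the goods whose availability and price did not change. The classical
price constructions turn this into submodularity and the triple condition of `v`.

The heart of the proof is an exchange property of demanded bundles: if `S` and `T` are
demanded and `x ∈ S \ T`, then `S - x` or some `S - x + y` with `y ∈ T \ S` is demanded. To
find it, raise the price of `x` by `ε` and the price of every good outside `S` by a much smaller
`δ`; GS yields a demanded `S' ⊇ S - x` avoiding `x` with `|S' \ S|` minimal, and if
`|S' \ S| ≥ 2` the triple condition applied to two goods of `S' \ S` contradicts that
minimality. Exchange then shows that all minimal demanded bundles have the same size, and that
they satisfy the basis exchange axiom.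
-/

open Finset

noncomputable section

section
variable {m : ℕ} {v : Finset (Fin m) → ℝ} {p p' : Fin m → ℝ} {D D' S T : Finset (Fin m)}

/-- Demand when only the goods of `D` are on the market. -/
def DemOn (v : Finset (Fin m) → ℝ) (p : Fin m → ℝ) (D S : Finset (Fin m)) : Prop :=
  S ⊆ D ∧ ∀ T ⊆ D, utilB v p T ≤ utilB v p S

/-- Pricing the goods outside `D` above `v univ` takes them off the market
(`mem_demB_confinedPrice_iff`). -/
def confinedPrice (v : Finset (Fin m) → ℝ) (p : Fin m → ℝ) (D : Finset (Fin m)) :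
    Fin m → ℝ :=
  fun g => if g ∈ D then p g else max (p g) (v univ + 1)

lemma demOn_univ_iff : DemOn v p univ S ↔ S ∈ DemB v p := by
  simp [DemOn, DemB]

lemma DemOn.mem_demB {S₀ : Finset (Fin m)} (h : DemOn v p D S) (hS₀ : S₀ ∈ DemB v p)
    (hS₀D : S₀ ⊆ D) : S ∈ DemB v p :=
  fun T => (hS₀ T).trans (h.2 S₀ hS₀D)

lemma le_confinedPrice (g : Fin m) : p g ≤ confinedPrice v p D g := by
  unfold confinedPrice; split_ifs <;> simp

lemma confinedPrice_of_mem {g : Fin m} (hg : g ∈ D) : confinedPrice v p D g = p g := if_pos hg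

lemma utilB_confinedPrice_of_subset (hT : T ⊆ D) :
    utilB v (confinedPrice v p D) T = utilB v p T := by
  unfold utilB
  rw [sum_congr rfl fun g hg => confinedPrice_of_mem (hT hg)]

lemma utilB_confinedPrice_neg (hmono : Monotone v) (hp : ∀ g, 0 ≤ p g) (hT : ¬ T ⊆ D) :
    utilB v (confinedPrice v p D) T < 0 := by
  obtain ⟨g, hgT, hgD⟩ := not_subset.mp hT
  have hg : v univ < confinedPrice v p D g := by
    simp only [confinedPrice, if_neg hgD]; exact (lt_add_one _).trans_le (le_max_right _ _)
  have hsum : confinedPrice v p D g ≤ ∑ g ∈ T, confinedPrice v p D g :=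
    single_le_sum (fun g _ => (hp g).trans (le_confinedPrice g)) hgT
  have := hmono (subset_univ T)
  unfold utilB; linarith

lemma mem_demB_confinedPrice_iff (hmono : Monotone v) (hempty : v ∅ = 0) (hp : ∀ g, 0 ≤ p g) :
    S ∈ DemB v (confinedPrice v p D) ↔ DemOn v p D S := by
  have hne : ∀ {U}, ¬ U ⊆ D → utilB v (confinedPrice v p D) U < 0 :=
    utilB_confinedPrice_neg hmono hp
  have h0 : utilB v p ∅ = 0 := by simp [utilB, hempty]
  constructor
  · intro hS
    have hSD : S ⊆ D := by
      by_contra h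
      have := hS ∅
      rw [utilB_confinedPrice_of_subset (empty_subset D)] at this
      linarith [hne h]
    refine ⟨hSD, fun T hT => ?_⟩
    simpa only [utilB_confinedPrice_of_subset hT, utilB_confinedPrice_of_subset hSD] using hS T
  · rintro ⟨hSD, hS⟩ T
    rw [utilB_confinedPrice_of_subset hSD]
    by_cases hT : T ⊆ D
    · rw [utilB_confinedPrice_of_subset hT]; exact hS T hT
    · linarith [hne hT, hS ∅ (empty_subset D)]

theorem GrossSubstitutes.exists_demOn (hGS : GrossSubstitutes v) (hmono : Monotone v)
    (hempty : v ∅ = 0) (hp : ∀ g, 0 ≤ p g) (hpp' : ∀ g, p g ≤ p' g) (hD : D' ⊆ D)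
    (hS : DemOn v p D S) :
    ∃ S', DemOn v p' D' S' ∧ ∀ g ∈ S, g ∈ D' → p g = p' g → g ∈ S' := by
  have hp' : ∀ g, 0 ≤ p' g := fun g => (hp g).trans (hpp' g)
  have hle : ∀ g, confinedPrice v p D g ≤ confinedPrice v p' D' g := by
    intro g
    unfold confinedPrice
    split_ifs with h h₁ h₂
    · exact hpp' g
    · exact (hpp' g).trans (le_max_left _ _)
    · exact absurd (hD h₂) h
    · exact max_le_max (hpp' g) le_rfl
  obtain ⟨S', hS', hkeep⟩ := hGS _ _ (fun g => (hp g).trans (le_confinedPrice g)) hle S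
    ((mem_demB_confinedPrice_iff hmono hempty hp).2 hS)
  refine ⟨S', (mem_demB_confinedPrice_iff hmono hempty hp').1 hS',
    fun g hgS hgD' hg => hkeep g hgS ?_⟩
  rw [confinedPrice_of_mem (hD hgD'), confinedPrice_of_mem hgD', hg]

section FreeGoods

variable {π : Fin m → ℝ} {A P : Finset (Fin m)}

lemma utilB_union_of_eq_zero (hA : ∀ g ∈ A, π g = 0) (E : Finset (Fin m)) :
    utilB v π (A ∪ E) = v (A ∪ E) - ∑ g ∈ E, π g := by
  have h := sum_union_inter (s₁ := A) (s₂ := E) (f := π)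
  rw [sum_eq_zero hA, sum_eq_zero fun g hg => hA g (mem_inter.1 hg).1] at h
  simp only [utilB]; linarith

lemma utilB_le_union_inter (hmono : Monotone v) (hπ : ∀ g, 0 ≤ π g)
    (hA : ∀ g ∈ A, π g = 0) (hT : T ⊆ A ∪ P) :
    utilB v π T ≤ utilB v π (A ∪ (T ∩ P)) := by
  rw [utilB_union_of_eq_zero hA]
  have hv : v T ≤ v (A ∪ (T ∩ P)) := hmono fun g hg => by
    have := hT hg; simp only [mem_union, mem_inter] at this ⊢; tauto
  have hsum : ∑ g ∈ T ∩ P, π g ≤ ∑ g ∈ T, π g :=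
    sum_le_sum_of_subset_of_nonneg inter_subset_left fun g _ _ => hπ g
  simp only [utilB]; linarith

theorem GrossSubstitutes.exists_le_of_forall_powerset (hGS : GrossSubstitutes v)
    (hmono : Monotone v) (hempty : v ∅ = 0) (hπ : ∀ g, 0 ≤ π g) (hA : ∀ g ∈ A, π g = 0)
    {P' F F' : Finset (Fin m)} (hP' : P' ⊆ P) (hF : F ⊆ P) (hF' : F' ⊆ P') {z : Fin m}
    (hzF : z ∈ F) (hzP' : z ∈ P')
    (hmax : ∀ E ∈ P.powerset,
      v (A ∪ E) - ∑ g ∈ E, π g ≤ v (A ∪ F) - ∑ g ∈ F, π g) :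
    ∃ E ∈ P'.powerset, z ∈ E ∧
      v (A ∪ F') - ∑ g ∈ F', π g ≤ v (A ∪ E) - ∑ g ∈ E, π g := by
  have hdem : DemOn v π (A ∪ P) (A ∪ F) := by
    refine ⟨union_subset_union subset_rfl hF, fun T hT => ?_⟩
    refine (utilB_le_union_inter hmono hπ hA hT).trans ?_
    rw [utilB_union_of_eq_zero hA, utilB_union_of_eq_zero hA]
    exact hmax _ (mem_powerset.2 inter_subset_right)
  obtain ⟨S, hS, hkeep⟩ := hGS.exists_demOn hmono hempty hπ (fun _ => le_rfl)
    (union_subset_union subset_rfl hP') hdem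
  have hzS := hkeep z (mem_union_right A hzF) (mem_union_right A hzP') rfl
  refine ⟨S ∩ P', mem_powerset.2 inter_subset_right, mem_inter.2 ⟨hzS, hzP'⟩, ?_⟩
  have h₁ := hS.2 _ (union_subset_union subset_rfl hF')
  have h₂ := utilB_le_union_inter hmono hπ hA hS.1
  rw [utilB_union_of_eq_zero hA] at h₁ h₂
  linarith

end FreeGoods

theorem GrossSubstitutes.submodular (hGS : GrossSubstitutes v) (hmono : Monotone v)
    (hempty : v ∅ = 0) {X : Finset (Fin m)} {x y : Fin m} (hx : x ∉ X) (hy : y ∉ X)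
    (hxy : x ≠ y) : v (insert x (insert y X)) + v X ≤ v (insert x X) + v (insert y X) := by
  by_contra! h
  obtain ⟨ε, hε⟩ : ∃ ε, ε = (v (insert x (insert y X)) + v X
      - v (insert x X) - v (insert y X)) / 2 := ⟨_, rfl⟩
  -- Prices making `X ∪ {x, y}` optimal with utility `v X + ε / 2`; once `x` is unavailable,
  -- `X` beats `X ∪ {y}` by `ε`.
  let π : Fin m → ℝ := fun g =>
    if g = x then v (insert x X) - v X + ε / 2
    else if g = y then v (insert x (insert y X)) - v (insert x X) - ε else 0
  have hπ : ∀ g, 0 ≤ π g := by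
    have := hmono (subset_insert x X); have := hmono (subset_insert y X)
    have := hmono (subset_insert x (insert y X))
    intro g; dsimp only [π]; split_ifs <;> linarith
  have hπX : ∀ g ∈ X, π g = 0 := fun g hg => by
    simp [π, ne_of_mem_of_not_mem hg hx, ne_of_mem_of_not_mem hg hy]
  have hπx : π x = v (insert x X) - v X + ε / 2 := if_pos rfl
  have hπy : π y = v (insert x (insert y X)) - v (insert x X) - ε := by simp [π, hxy.symm]
  obtain ⟨E, hE, hyE, hle⟩ := hGS.exists_le_of_forall_powerset hmono hempty hπ hπX
    (P := {x, y}) (P' := {y}) (F' := ∅) (by simp) subset_rfl (empty_subset _)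
    (mem_insert_of_mem (mem_singleton_self y)) (mem_singleton_self y) (by
      simp only [powerset_insert, forall_mem_union, forall_mem_image, mem_powerset,
        subset_singleton_iff, forall_eq_or_imp, forall_eq, union_insert, union_singleton,
        union_empty, insert_empty, sum_empty, sum_insert, sum_singleton, mem_singleton, hxy,
        not_false_eq_true]
      refine ⟨⟨?_, ?_⟩, ?_, ?_⟩ <;> linarith [hπx, hπy])
  obtain rfl := (subset_singleton_iff.1 (mem_powerset.1 hE)).resolve_left (ne_empty_of_mem hyE)
  simp only [union_empty, sum_empty, union_singleton, sum_singleton] at hle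
  linarith

theorem GrossSubstitutes.triple (hGS : GrossSubstitutes v) (hmono : Monotone v)
    (hempty : v ∅ = 0) {A : Finset (Fin m)} {x y z : Fin m} (hx : x ∉ A) (hy : y ∉ A)
    (hz : z ∉ A) (hxy : x ≠ y) (hxz : x ≠ z) (hyz : y ≠ z) :
    v (insert y (insert z A)) + v (insert x A) ≤
      max (v (insert x (insert y A)) + v (insert z A))
        (v (insert x (insert z A)) + v (insert y A)) := by
  by_contra! h
  obtain ⟨h₁, h₂⟩ := max_lt_iff.1 h
  have hsubA := hGS.submodular hmono hempty hy hz hyz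
  have hsubAx : v (insert x (insert y (insert z A))) + v (insert x A) ≤
      v (insert x (insert y A)) + v (insert x (insert z A)) := by
    have := hGS.submodular hmono hempty (X := insert x A) (by simp [hxy.symm, hy])
      (by simp [hxz.symm, hz]) hyz
    rwa [insert_comm y x, insert_comm z x, insert_comm y x] at this
  have := hmono (subset_insert x (insert y A)); have := hmono (subset_insert x (insert z A))
  have := hmono (insert_subset_insert x (subset_insert y A))
  have := hmono (insert_subset_insert x (subset_insert z A))
  obtain ⟨s₁, hs₁⟩ : ∃ s, s = v (insert y (insert z A)) + v (insert x A)
      - v (insert x (insert y A)) - v (insert z A) := ⟨_, rfl⟩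
  obtain ⟨s₂, hs₂⟩ : ∃ s, s = v (insert y (insert z A)) + v (insert x A)
      - v (insert x (insert z A)) - v (insert y A) := ⟨_, rfl⟩
  obtain ⟨ε, hε₀, hε₁, hε₂⟩ : ∃ ε > 0, ε ≤ s₁ ∧ ε ≤ s₂ :=
    ⟨min s₁ s₂, lt_min (by linarith) (by linarith), min_le_left _ _, min_le_right _ _⟩
  -- With `c = v (A ∪ {y}) + v (A ∪ {z}) - v (A ∪ {y, z})`, these prices make `A ∪ {y, z}`
  -- optimal with utility `c + 3ε/4`; once `y` is unavailable, `A ∪ {x}` (utility `c + ε/2`)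
  -- beats every bundle containing `z`.
  obtain ⟨πx, hπx⟩ : ∃ π, π = v (insert x A) - v (insert y A) - v (insert z A)
      + v (insert y (insert z A)) - ε / 2 := ⟨_, rfl⟩
  obtain ⟨πy, hπy⟩ : ∃ π, π = v (insert y (insert z A)) - v (insert z A) - ε / 2 :=
    ⟨_, rfl⟩
  obtain ⟨πz, hπz⟩ : ∃ π, π = v (insert y (insert z A)) - v (insert y A) - ε / 4 :=
    ⟨_, rfl⟩
  let π : Fin m → ℝ := fun g =>
    if g = x then πx else if g = y then πy else if g = z then πz else 0
  have hπ : ∀ g, 0 ≤ π g := by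
    intro g; dsimp only [π]; split_ifs <;> linarith
  have hπA : ∀ g ∈ A, π g = 0 := fun g hg => by
    simp [π, ne_of_mem_of_not_mem hg hx, ne_of_mem_of_not_mem hg hy, ne_of_mem_of_not_mem hg hz]
  have hπx' : π x = πx := if_pos rfl
  have hπy' : π y = πy := by simp [π, hxy.symm]
  have hπz' : π z = πz := by simp [π, hxz.symm, hyz.symm]
  obtain ⟨E, hE, hzE, hle⟩ := hGS.exists_le_of_forall_powerset hmono hempty hπ hπA
    (P := {x, y, z}) (P' := {x, z}) (F := {y, z}) (F' := {x}) (z := z)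
    (by simp [insert_subset_iff]) (subset_insert x _) (by simp) (by simp) (by simp) (by
      simp only [powerset_insert, forall_mem_union, forall_mem_image, mem_powerset,
        subset_singleton_iff, forall_eq_or_imp, forall_eq, union_insert, union_singleton,
        union_empty, insert_empty, sum_empty, sum_insert, sum_singleton, mem_singleton, mem_insert,
        hxy, hxz, hyz, or_self, not_false_eq_true, hπx', hπy', hπz']
      refine ⟨⟨⟨?_, ?_⟩, ?_, ?_⟩, ⟨?_, ?_⟩, ?_, ?_⟩ <;> linarith)
  simp only [powerset_insert, mem_union, mem_image, mem_powerset, subset_singleton_iff] at hE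
  rcases hE with (rfl | rfl) | ⟨E, (rfl | rfl), rfl⟩ <;>
    simp only [notMem_empty, insert_empty_eq, mem_insert, mem_singleton, or_true, union_insert,
      union_singleton, sum_insert, sum_singleton, hxz, hxz.symm, not_false_eq_true, hπx',
      hπz'] at hzE hle <;> linarith

theorem GrossSubstitutes.demB_triple (hGS : GrossSubstitutes v) (hmono : Monotone v)
    (hempty : v ∅ = 0) {A : Finset (Fin m)} {x y z : Fin m} (hx : x ∉ A) (hy : y ∉ A)
    (hz : z ∉ A) (hxy : x ≠ y) (hxz : x ≠ z) (hyz : y ≠ z)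
    (hyzA : insert y (insert z A) ∈ DemB v p) (hxA : insert x A ∈ DemB v p) :
    insert y A ∈ DemB v p ∨ insert z A ∈ DemB v p := by
  have h₁ := hyzA (insert x (insert y A))
  have h₂ := hyzA (insert x (insert z A))
  simp only [utilB, sum_insert, mem_insert, hx, hy, hz, hxy, hxz, hyz, or_self,
    not_false_eq_true] at h₁ h₂
  rcases le_max_iff.1 (hGS.triple hmono hempty hx hy hz hxy hxz hyz) with h | h
  · refine Or.inr fun T => (hxA T).trans ?_
    simp only [utilB, sum_insert, hx, hz, not_false_eq_true]
    linarith
  · refine Or.inl fun T => (hxA T).trans ?_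
    simp only [utilB, sum_insert, hx, hy, not_false_eq_true]
    linarith

lemma exists_utilB_gap (v : Finset (Fin m) → ℝ) (p : Fin m → ℝ) :
    ∃ γ > 0, ∀ S ∈ DemB v p, ∀ U ∉ DemB v p, utilB v p U + γ ≤ utilB v p S := by
  classical
  set P := (univ ×ˢ univ : Finset (Finset (Fin m) × Finset (Fin m))).filter
    fun q => q.1 ∈ DemB v p ∧ q.2 ∉ DemB v p
  have hP : ∀ {S U}, S ∈ DemB v p → U ∉ DemB v p → (S, U) ∈ P := fun hS hU =>
    mem_filter.2 ⟨mem_univ _, hS, hU⟩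
  rcases P.eq_empty_or_nonempty with hP₀ | hP₀
  · exact ⟨1, one_pos, fun S hS U hU => absurd (hP hS hU) (hP₀ ▸ notMem_empty _)⟩
  obtain ⟨q, hq, hmin⟩ := P.exists_min_image (fun q => utilB v p q.1 - utilB v p q.2) hP₀
  obtain ⟨hq₁, hq₂⟩ := (mem_filter.1 hq).2
  refine ⟨utilB v p q.1 - utilB v p q.2, ?_, fun S hS U hU => by linarith [hmin _ (hP hS hU)]⟩
  obtain ⟨T, hT⟩ : ∃ T, utilB v p q.2 < utilB v p T := by simpa [DemB] using hq₂
  linarith [hq₁ T]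

lemma utilB_add (p w : Fin m → ℝ) (U : Finset (Fin m)) :
    utilB v (p + w) U = utilB v p U - ∑ g ∈ U, w g := by
  simp only [utilB, Pi.add_apply, sum_add_distrib]; ring

lemma DemOn.mem_demB_of_add {w : Fin m → ℝ} {γ : ℝ} {S₀ : Finset (Fin m)}
    (hγ : ∀ S ∈ DemB v p, ∀ U ∉ DemB v p, utilB v p U + γ ≤ utilB v p S)
    (hw : ∀ g, 0 ≤ w g) (hwD : ∑ g ∈ D, w g < γ) (hS₀ : S₀ ∈ DemB v p)
    (hS₀D : S₀ ⊆ D) (h : DemOn v (p + w) D S) :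
    S ∈ DemB v p ∧ ∀ U ∈ DemB v p, U ⊆ D → ∑ g ∈ S, w g ≤ ∑ g ∈ U, w g := by
  have hsum : ∀ {U}, U ⊆ D → ∑ g ∈ U, w g ≤ ∑ g ∈ D, w g := fun hU =>
    sum_le_sum_of_subset_of_nonneg hU fun g _ _ => hw g
  have hS : S ∈ DemB v p := by
    by_contra hS
    have := h.2 S₀ hS₀D
    rw [utilB_add, utilB_add] at this
    linarith [hγ S₀ hS₀ S hS, hsum hS₀D, sum_nonneg fun g (_ : g ∈ S) => hw g]
  refine ⟨hS, fun U hU hUD => ?_⟩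
  have := h.2 U hUD
  rw [utilB_add, utilB_add] at this
  linarith [hS U, hU S]

lemma sum_pi_single_add_ite (x : Fin m) (ε δ : ℝ) (U : Finset (Fin m)) :
    ∑ g ∈ U, ((Pi.single x ε : Fin m → ℝ) g + if g ∈ S then 0 else δ) =
      (if x ∈ U then ε else 0) + #(U \ S) * δ := by
  rw [sum_add_distrib, sum_pi_single', sum_ite, sum_const_zero, zero_add, sum_const,
    ← sdiff_eq_filter, nsmul_eq_mul]

theorem GrossSubstitutes.exists_demB_erase_subset_min_card (hGS : GrossSubstitutes v)
    (hmono : Monotone v) (hempty : v ∅ = 0) (hp : ∀ g, 0 ≤ p g) (hS : S ∈ DemB v p)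
    (hT : T ∈ DemB v p) {x : Fin m} (hxS : x ∈ S) (hxT : x ∉ T) :
    ∃ S' ∈ DemB v p, S' ⊆ S ∪ T ∧ x ∉ S' ∧ S.erase x ⊆ S' ∧
      ∀ U ∈ DemB v p, U ⊆ S ∪ T → x ∉ U → #(S' \ S) ≤ #(U \ S) := by
  obtain ⟨γ, hγ₀, hγ⟩ := exists_utilB_gap v p
  -- Dropping `x` must outweigh all the `δ`'s of `T \ S`, and the whole perturbation of `S ∪ T`
  -- must stay below the utility gap `γ`, so that only demanded bundles remain optimal.
  set ε := γ / 2 with hε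
  set δ := ε / (#(T \ S) + 1)
  have hε₀ : 0 < ε := half_pos hγ₀
  have hδ₀ : 0 < δ := by positivity
  have hδ : #(T \ S) * δ < ε := by
    rw [mul_div_assoc', div_lt_iff₀ (by positivity)]; linarith
  set w : Fin m → ℝ := fun g => (Pi.single x ε : Fin m → ℝ) g + if g ∈ S then 0 else δ
  have hw : ∀ g, 0 ≤ w g := fun g => add_nonneg
    (by rw [Pi.single_apply]; split_ifs <;> positivity) (by split_ifs <;> positivity)
  have hsum := sum_pi_single_add_ite (S := S) x ε δ
  obtain ⟨S', hS', hkeep⟩ := hGS.exists_demOn (p' := p + w) (D' := S ∪ T) hmono hempty hp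
    (fun g => le_add_of_nonneg_right (hw g)) (subset_univ _) (demOn_univ_iff.2 hS)
  obtain ⟨hS'dem, hS'min⟩ := hS'.mem_demB_of_add hγ hw
    (by rw [hsum, if_pos (mem_union_left T hxS), union_sdiff_left]; linarith [hε]) hT
    subset_union_right
  have hxS' : x ∉ S' := fun hx => by
    have := hS'min T hT subset_union_right
    rw [hsum, hsum, if_pos hx, if_neg hxT] at this
    linarith [mul_nonneg (Nat.cast_nonneg (α := ℝ) #(S' \ S)) hδ₀.le]
  refine ⟨S', hS'dem, hS'.1, hxS', fun g hg => ?_, fun U hU hUST hxU => ?_⟩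
  · obtain ⟨hgx, hgS⟩ := mem_erase.1 hg
    exact hkeep g hgS (mem_union_left T hgS) (by simp [w, hgS, Pi.single_apply, hgx])
  · have := hS'min U hU hUST
    rw [hsum, hsum, if_neg hxS', if_neg hxU] at this
    exact Nat.cast_le.1 (le_of_mul_le_mul_right (by linarith) hδ₀)

theorem GrossSubstitutes.card_le_one_of_forall_demB (hGS : GrossSubstitutes v)
    (hmono : Monotone v) (hempty : v ∅ = 0) (hp : ∀ g, 0 ≤ p g) {W : Finset (Fin m)}
    {x : Fin m} (hS : S ∈ DemB v p) (hxS : x ∈ S) (hSW : Disjoint S W)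
    (hdem : S.erase x ∪ W ∈ DemB v p)
    (hmin : ∀ U ∈ DemB v p, U ⊆ S ∪ W → x ∉ U → W ⊆ U) : #W ≤ 1 := by
  by_contra! h
  obtain ⟨y, hy, z, hz, hyz⟩ := one_lt_card.1 h
  have hyS : y ∉ S := disjoint_right.1 hSW hy
  have hzS : z ∉ S := disjoint_right.1 hSW hz
  set A := S.erase x ∪ (W \ {y, z})
  have hxA : x ∉ A := by simp [A, disjoint_left.1 hSW hxS]
  have hyA : y ∉ A := by simp [A, hyS]
  have hzA : z ∉ A := by simp [A, hzS]
  have hAsub : A ⊆ S ∪ W := union_subset_union (erase_subset x S) sdiff_subset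
  have hAyz : insert y (insert z A) = S.erase x ∪ W := by
    ext g; simp only [A, mem_insert, mem_union, mem_erase, mem_sdiff]; grind
  -- Taking the goods outside `insert x A` off the market keeps `A`, and minimality adds `x`.
  have hxAdem : insert x A ∈ DemB v p := by
    obtain ⟨S'', hS'', hkeep⟩ := hGS.exists_demOn (p' := p) (D' := insert x A) hmono hempty hp
      (fun _ => le_rfl) (subset_univ _) (demOn_univ_iff.2 hdem)
    have hS''dem : S'' ∈ DemB v p := hS''.mem_demB hS fun g hg => by
      by_cases hgx : g = x <;> simp [A, hgx, hg]
    have hAS'' : A ⊆ S'' := fun g hg => hkeep g (by rw [← hAyz]; simp [hg]) (by simp [hg]) rfl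
    have hxS'' : x ∈ S'' := by
      by_contra hx
      have hyS'' := hmin S'' hS''dem
        (hS''.1.trans (insert_subset (mem_union_left W hxS) hAsub)) hx hy
      simpa [ne_of_mem_of_not_mem hxS hyS |>.symm, hyA] using hS''.1 hyS''
    rwa [(insert_subset hxS'' hAS'').antisymm hS''.1]
  rcases hGS.demB_triple hmono hempty hxA hyA hzA (by grind) (by grind) hyz (hAyz ▸ hdem) hxAdem
    with h | h
  · have := hmin _ h (insert_subset (mem_union_right S hy) hAsub)
      (by simp [hxA, ne_of_mem_of_not_mem hxS hyS]) hz
    simp [hzA, hyz.symm] at this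
  · have := hmin _ h (insert_subset (mem_union_right S hz) hAsub)
      (by simp [hxA, ne_of_mem_of_not_mem hxS hzS]) hy
    simp [hyA, hyz] at this

theorem GrossSubstitutes.demB_erase_or_exchange (hGS : GrossSubstitutes v) (hmono : Monotone v)
    (hempty : v ∅ = 0) (hp : ∀ g, 0 ≤ p g) (hS : S ∈ DemB v p) (hT : T ∈ DemB v p)
    {x : Fin m} (hxS : x ∈ S) (hxT : x ∉ T) :
    S.erase x ∈ DemB v p ∨ ∃ y ∈ T \ S, insert y (S.erase x) ∈ DemB v p := by
  obtain ⟨S', hS'dem, hS'ST, hxS', hSS', hmin⟩ :=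
    hGS.exists_demB_erase_subset_min_card hmono hempty hp hS hT hxS hxT
  have hS' : S.erase x ∪ (S' \ S) = S' := by
    refine (union_subset hSS' sdiff_subset).antisymm fun g hg => ?_
    by_cases hgS : g ∈ S
    · exact mem_union_left _ (mem_erase.2 ⟨ne_of_mem_of_not_mem hg hxS', hgS⟩)
    · exact mem_union_right _ (mem_sdiff.2 ⟨hg, hgS⟩)
  have hcard : #(S' \ S) ≤ 1 := by
    refine hGS.card_le_one_of_forall_demB hmono hempty hp hS hxS disjoint_sdiff
      (by rwa [hS']) fun U hU hUS hxU => ?_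
    have hUS' : U \ S ⊆ S' \ S := fun g hg =>
      (mem_union.1 (hUS (mem_sdiff.1 hg).1)).resolve_left (mem_sdiff.1 hg).2
    have hUST : U ⊆ S ∪ T :=
      hUS.trans (by rw [union_sdiff_self_eq_union]; exact union_subset subset_union_left hS'ST)
    rw [← eq_of_subset_of_card_le hUS' (hmin U hU hUST hxU)]
    exact sdiff_subset
  rcases Nat.le_one_iff_eq_zero_or_eq_one.1 hcard with h | h
  · rw [card_eq_zero.1 h, union_empty] at hS'
    exact Or.inl (hS' ▸ hS'dem)
  · obtain ⟨y, hy⟩ := card_eq_one.1 h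
    have hyS' := mem_sdiff.1 (hy ▸ mem_singleton_self y)
    rw [hy, union_singleton] at hS'
    exact Or.inr ⟨y, mem_sdiff.2 ⟨(mem_union.1 (hS'ST hyS'.1)).resolve_left hyS'.2, hyS'.2⟩,
      hS' ▸ hS'dem⟩

theorem GrossSubstitutes.exists_demB_subset_card_le (hGS : GrossSubstitutes v)
    (hmono : Monotone v) (hempty : v ∅ = 0) (hp : ∀ g, 0 ≤ p g) {B U : Finset (Fin m)}
    (hB : B ∈ DemB v p) (hU : U ∈ DemB v p) : ∃ U' ∈ DemB v p, U' ⊆ B ∧ #U' ≤ #U := by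
  obtain ⟨n, hn⟩ : ∃ n, #(U \ B) = n := ⟨_, rfl⟩
  induction n generalizing U with
  | zero => exact ⟨U, hU, sdiff_eq_empty_iff_subset.1 (card_eq_zero.1 hn), le_rfl⟩
  | succ n ih =>
    obtain ⟨x, hx⟩ := card_pos.1 (show 0 < #(U \ B) by omega)
    obtain ⟨hxU, hxB⟩ := mem_sdiff.1 hx
    have hn' : #(U.erase x \ B) = n := by rw [erase_sdiff_comm, card_erase_of_mem hx, hn]; rfl
    rcases hGS.demB_erase_or_exchange hmono hempty hp hU hB hxU hxB with h | ⟨y, hy, h⟩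
    · obtain ⟨U', hU', hU'B, hcard⟩ := ih h hn'
      exact ⟨U', hU', hU'B, hcard.trans card_erase_le⟩
    · obtain ⟨hyB, hyU⟩ := mem_sdiff.1 hy
      obtain ⟨U', hU', hU'B, hcard⟩ := ih h (by rwa [insert_sdiff_of_mem _ hyB])
      refine ⟨U', hU', hU'B, hcard.trans_eq ?_⟩
      rw [card_insert_of_notMem fun h => hyU (mem_of_mem_erase h), card_erase_add_one hxU]

theorem GrossSubstitutes.card_le_of_mem_dstarB (hGS : GrossSubstitutes v) (hmono : Monotone v)
    (hempty : v ∅ = 0) (hp : ∀ g, 0 ≤ p g) {B U : Finset (Fin m)} (hB : B ∈ DstarB v p)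
    (hU : U ∈ DemB v p) : #B ≤ #U := by
  obtain ⟨U', hU', hU'B, hcard⟩ := hGS.exists_demB_subset_card_le hmono hempty hp hB.1 hU
  obtain rfl : U' = B := by_contra fun h => hB.2 U' (ssubset_of_subset_of_ne hU'B h) hU'
  exact hcard

theorem GrossSubstitutes.dstarB_exchange (hGS : GrossSubstitutes v) (hmono : Monotone v)
    (hempty : v ∅ = 0) (hp : ∀ g, 0 ≤ p g) {B₁ B₂ : Finset (Fin m)}
    (hB₁ : B₁ ∈ DstarB v p) (hB₂ : B₂ ∈ DstarB v p) {x : Fin m} (hx₁ : x ∈ B₁)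
    (hx₂ : x ∉ B₂) :
    ∃ y ∈ B₂ \ B₁, insert y (B₁.erase x) ∈ DstarB v p := by
  rcases hGS.demB_erase_or_exchange hmono hempty hp hB₁.1 hB₂.1 hx₁ hx₂ with
    h | ⟨y, hy, h⟩
  · exact absurd h (hB₁.2 _ (erase_ssubset hx₁))
  refine ⟨y, hy, h, fun T hT hTdem => ?_⟩
  have h₁ := hGS.card_le_of_mem_dstarB hmono hempty hp hB₁ hTdem
  have h₂ := card_lt_card hT
  rw [card_insert_of_notMem fun h => (mem_sdiff.1 hy).2 (mem_of_mem_erase h),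
    card_erase_add_one hx₁] at h₂
  omega

lemma exists_mem_dstarB (v : Finset (Fin m) → ℝ) (p : Fin m → ℝ) :
    ∃ B, B ∈ DstarB v p := by
  classical
  obtain ⟨S, -, hS⟩ := exists_max_image univ (utilB v p) univ_nonempty
  obtain ⟨B, hB, hmin⟩ := exists_min_image (univ.filter (· ∈ DemB v p)) card
    ⟨S, mem_filter.2 ⟨mem_univ S, fun T => hS T (mem_univ T)⟩⟩
  exact ⟨B, (mem_filter.1 hB).2, fun T hT hTdem =>
    (card_lt_card hT).not_ge (hmin T (mem_filter.2 ⟨mem_univ T, hTdem⟩))⟩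

end

/-- for a monotone gross substitutes valuation and any nonnegative price
vector, the minimum demand correspondence is the set of bases of a matroid on the
ground set of all goods. -/
theorem stmt11 (m : ℕ) (v : Finset (Fin m) → ℝ)
    (hmono : ∀ A B : Finset (Fin m), A ⊆ B → v A ≤ v B)
    (hempty : v ∅ = 0) (hGS : GrossSubstitutes v)
    (p : Fin m → ℝ) (hp : ∀ g, 0 ≤ p g) :
    ∃ M : Matroid (Fin m), M.E = Set.univ ∧
      ∀ B : Finset (Fin m), M.IsBase ↑B ↔ B ∈ DstarB v p := by
  obtain ⟨B₀, hB₀⟩ := exists_mem_dstarB v p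
  let IsBase : Set (Fin m) → Prop := fun X => ∃ B ∈ DstarB v p, (B : Set (Fin m)) = X
  have hexch : Matroid.ExchangeProperty IsBase := by
    rintro _ _ ⟨B₁, hB₁, rfl⟩ ⟨B₂, hB₂, rfl⟩ x ⟨hx₁, hx₂⟩
    obtain ⟨y, hy, hdem⟩ := hGS.dstarB_exchange hmono hempty hp hB₁ hB₂ hx₁ hx₂
    exact ⟨y, by simpa using hy, _, hdem, by simp⟩
  refine ⟨Matroid.ofIsBaseOfFinite Set.finite_univ IsBase ⟨_, B₀, hB₀, rfl⟩ hexch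
    fun _ _ => Set.subset_univ _, rfl, fun B => ?_⟩
  rw [Matroid.ofIsBaseOfFinite_isBase]
  exact ⟨fun ⟨B', hB', h⟩ => coe_inj.1 h ▸ hB', fun h => ⟨B, h, rfl⟩⟩

end
end

section
/- Let v be a monotone submodular valuation on bundles of m goods with v(∅) = 0 (every gross substitutes valuation is submodular), and let p ∈ (ℝ≥0)^m. If B ⊆ B'' ⊆ B' and both B and B' belong to the demand correspondence Dem(p), then u(B;p) = u(B'';p) = u(B';p); in particular, B'' ∈ Dem(p). -/
open Finset

noncomputable section

/-- Submodularity of a valuation over bundles. -/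
def SubmodularB {m : ℕ} (v : Finset (Fin m) → ℝ) : Prop :=
  ∀ A B : Finset (Fin m), ∀ g : Fin m, A ⊆ B → g ∉ B →
    v (insert g B) - v B ≤ v (insert g A) - v A

/-- Set-marginal form of submodularity. -/
lemma submod_union {m : ℕ} {v : Finset (Fin m) → ℝ} (hsub : SubmodularB v) :
    ∀ D A B : Finset (Fin m), A ⊆ B → Disjoint D B →
      v (B ∪ D) - v B ≤ v (A ∪ D) - v A := by
  intro D
  induction D using Finset.induction_on with
  | empty => intro A B _ _; simp
  | @insert g D hgD IH =>
    intro A B hAB hdisj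
    have hdisjD : Disjoint D B := (Finset.disjoint_insert_left.mp hdisj).2
    have hgB : g ∉ B := (Finset.disjoint_insert_left.mp hdisj).1
    have h1 : B ∪ insert g D = insert g (B ∪ D) := by
      simp [Finset.union_insert]
    have h2 : A ∪ insert g D = insert g (A ∪ D) := by
      simp [Finset.union_insert]
    rw [h1, h2]
    have hstep : v (insert g (B ∪ D)) - v (B ∪ D) ≤ v (insert g (A ∪ D)) - v (A ∪ D) := by
      apply hsub
      · exact Finset.union_subset_union hAB (le_refl D)
      · simp only [Finset.mem_union]
        rintro (h | h)
        · exact hgB h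
        · exact hgD h
    have hIH := IH A B hAB hdisjD
    linarith

/-- for a monotone submodular valuation, if `B ⊆ B'' ⊆ B'` and both `B`
and `B'` are demanded at prices `p`, then all three bundles yield the same utility;
in particular `B''` is demanded as well. -/
theorem stmt12 (m : ℕ) (v : Finset (Fin m) → ℝ)
    (hmono : ∀ A B : Finset (Fin m), A ⊆ B → v A ≤ v B)
    (hempty : v ∅ = 0) (hsub : SubmodularB v)
    (p : Fin m → ℝ) (hp : ∀ g, 0 ≤ p g)
    (B B'' B' : Finset (Fin m)) (h1 : B ⊆ B'') (h2 : B'' ⊆ B')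
    (hB : B ∈ DemB v p) (hB' : B' ∈ DemB v p) :
    utilB v p B = utilB v p B'' ∧ utilB v p B'' = utilB v p B' ∧ B'' ∈ DemB v p := by
  set D := B' \ B'' with hD
  have hdisj : Disjoint D B'' := Finset.sdiff_disjoint
  have hunion : B'' ∪ D = B' := by
    rw [hD, Finset.union_sdiff_of_subset h2]
  have hkey := submod_union hsub D B B'' h1 hdisj
  rw [hunion] at hkey
  -- price sums
  have hdisjB : Disjoint B D := Finset.disjoint_of_subset_left h1 hdisj.symm
  have hsum1 : ∑ g ∈ B ∪ D, p g = ∑ g ∈ B, p g + ∑ g ∈ D, p g :=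
    Finset.sum_union hdisjB
  have hsum2 : ∑ g ∈ B', p g = ∑ g ∈ B'', p g + ∑ g ∈ D, p g := by
    rw [← hunion]; exact Finset.sum_union hdisj.symm
  have hBB' : utilB v p B = utilB v p B' :=
    le_antisymm (hB' B) (hB B')
  have hle1 : utilB v p (B ∪ D) ≤ utilB v p B := hB (B ∪ D)
  have hle2 : utilB v p B'' ≤ utilB v p B' := hB' B''
  have hmain : utilB v p B' ≤ utilB v p B'' := by
    have : utilB v p B' - utilB v p B'' ≤ utilB v p (B ∪ D) - utilB v p B := by
      simp only [utilB, hsum1, hsum2]; linarith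
    linarith
  have heq2 : utilB v p B'' = utilB v p B' := le_antisymm hle2 hmain
  refine ⟨hBB'.trans heq2.symm, heq2, ?_⟩
  intro T
  calc utilB v p T ≤ utilB v p B' := hB' T
    _ = utilB v p B'' := heq2.symm

end
end

section
/- Let M be a matroid on a finite ground set X, let w : X → ℝ≥0 be nonnegative weights, and define the valuation induced by the weighted matroid by v(S) = max{ ∑_{j∈T} w(j) : T ⊆ S, T independent in M }. Then for every S ⊆ X there exists an independent set T* ⊆ S achieving v(S) = ∑_{j∈T*} w(j) that contains every element whose removal strictly decreases the value: {g ∈ S : v(S ∖ {g}) < v(S)} ⊆ T*. -/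
open Finset

noncomputable section

open scoped Classical in
/-- The valuation induced by a weighted matroid: the maximum total weight of an
independent subset of `S`. -/
def matVal {α : Type*} [Fintype α] (M : Matroid α) (w : α → ℝ) (S : Finset α) : ℝ :=
  (S.powerset.filter fun T => M.Indep ↑T).sup'
    ⟨∅, by simp [Finset.mem_filter, M.empty_indep]⟩
    (fun T => ∑ j ∈ T, w j)

open scoped Classical in
/-- There is an independent `T ⊆ S` attaining `matVal M w S`. -/
lemma exists_matVal {α : Type*} [Fintype α] (M : Matroid α) (w : α → ℝ) (S : Finset α) :
    ∃ T ⊆ S, M.Indep ↑T ∧ matVal M w S = ∑ j ∈ T, w j := by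
  unfold matVal
  obtain ⟨U, hU, hUeq⟩ := Finset.exists_mem_eq_sup'
    (s := ((do let a ← S.powerset; pure (↑a : Set α)) : Finset (Set α)).filter
      fun U : Set α => M.Indep U)
    (f := fun U : Set α => ∑ j ∈ U.toFinset, w j)
    ⟨∅, by simp [Finset.mem_filter, M.empty_indep]⟩
  simp only [Finset.mem_filter] at hU
  obtain ⟨hUmem, hUind⟩ := hU
  simp only [bind_pure_comp, Finset.mem_map, Finset.mem_powerset] at hUmem
  obtain ⟨a, haS, haU⟩ := by simpa using hUmem
  refine ⟨U.toFinset, ?_, by simpa, ?_⟩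
  · intro x hx
    rw [Set.mem_toFinset] at hx
    rw [← haU] at hx
    exact haS hx
  · rw [hUeq]

open scoped Classical in
/-- Every independent `T ⊆ S` has weight at most `matVal M w S`. -/
lemma le_matVal {α : Type*} [Fintype α] (M : Matroid α) (w : α → ℝ) (S T : Finset α)
    (hsub : T ⊆ S) (hind : M.Indep ↑T) : ∑ j ∈ T, w j ≤ matVal M w S := by
  unfold matVal
  refine le_trans ?_
    (Finset.le_sup' (f := fun U : Set α => ∑ j ∈ U.toFinset, w j) (b := (↑T : Set α)) ?_)
  · apply le_of_eq
    apply Finset.sum_congr _ (fun _ _ => rfl)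
    ext x; simp
  · simp only [Finset.mem_filter]
    refine ⟨?_, hind⟩
    simp only [bind_pure_comp, Finset.mem_map, Finset.mem_powerset]
    simpa using hsub

/-- for the valuation induced by a weighted matroid (nonnegative weights),
every bundle `S` admits a maximum-weight independent subset `T* ⊆ S` that contains every
element of `S` whose removal strictly decreases the value. -/
theorem stmt15 {α : Type*} [Fintype α] [DecidableEq α]
    (M : Matroid α) (hE : M.E = Set.univ)
    (w : α → ℝ) (hw : ∀ x, 0 ≤ w x) (S : Finset α) :
    ∃ T ⊆ S, M.Indep ↑T ∧ matVal M w S = ∑ j ∈ T, w j ∧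
      ∀ g ∈ S, matVal M w (S.erase g) < matVal M w S → g ∈ T := by
  obtain ⟨T, hTS, hTind, hTeq⟩ := exists_matVal M w S
  refine ⟨T, hTS, hTind, hTeq, ?_⟩
  intro g hg hlt
  by_contra hgT
  have hsub : T ⊆ S.erase g := fun x hx =>
    Finset.mem_erase.mpr ⟨fun h => hgT (h ▸ hx), hTS hx⟩
  have hle : matVal M w S ≤ matVal M w (S.erase g) := by
    rw [hTeq]
    exact le_matVal M w (S.erase g) T hsub hTind
  exact absurd hlt (not_lt.mpr hle)

end
end

section
/- Let all buyers have monotone gross substitutes valuations (v_q(∅) = 0) and let (p,μ) be a Walrasian equilibrium whose price vector p is minimal. For each buyer q fix a minimum demand bundle M_q ∈ D*_q(p) with M_q ⊆ μ_q, and form the swap graph G(p,μ,(M_q)). Define the non-degenerate demanders U•(g;p) = {q : g ∈ B for some non-degenerate B ∈ Dem_q(p)} and the non-degenerate over-demand OD•(g;p) = max(|U•(g;p)| − s_g, 0). If the buyer in-degree of the node of good g in G(p,μ,(M_q)) is at most d, then OD•(g;p) ≤ d. -/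
open Finset

noncomputable section

/-- A bundle is non-degenerate if every good in it has strictly positive marginal value. -/
def NonDegen {m : ℕ} (v : Finset (Fin m) → ℝ) (S : Finset (Fin m)) : Prop :=
  ∀ g ∈ S, v (S.erase g) < v S

/-- Buyer `q` labels an edge into the node of good `b` in the swap graph
`G(p, μ, M)`: either an edge from some good `a ∈ M q` (a single swap of `a` for `b`
preserving minimum demand), or an edge from the null node `⊥` (only into goods of
positive price). -/
def BuyerEdgeInto {n m : ℕ} (v : Fin n → Finset (Fin m) → ℝ) (p : Fin m → ℝ)
    (μ M : Fin n → Finset (Fin m)) (q : Fin n) (b : Fin m) : Prop :=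
  (∃ a ∈ M q, b ∉ μ q ∧ (∃ B ∈ DstarB (v q) p, b ∈ B) ∧
      (insert b (M q)).erase a ∈ DstarB (v q) p) ∨
  (b ∉ μ q ∧ 0 < p b ∧ ∃ B ∈ DemB (v q) p, b ∈ B ∧ B.erase b ∈ DstarB (v q) p)

section Helpers

variable {m : ℕ} (v : Finset (Fin m) → ℝ)

lemma util_add_prices (p c : Fin m → ℝ) (S : Finset (Fin m)) :
    utilB v (fun h => p h + c h) S = utilB v p S - ∑ h ∈ S, c h := by
  simp only [utilB, Finset.sum_add_distrib]; ring

lemma v_nonneg (hmono : ∀ A B : Finset (Fin m), A ⊆ B → v A ≤ v B) (hempty : v ∅ = 0)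
    (S : Finset (Fin m)) : 0 ≤ v S := by
  have := hmono ∅ S (Finset.empty_subset S); linarith

lemma v_le_top (hmono : ∀ A B : Finset (Fin m), A ⊆ B → v A ≤ v B) (S : Finset (Fin m)) :
    v S ≤ v Finset.univ := hmono S Finset.univ (Finset.subset_univ S)

lemma util_erase (p : Fin m → ℝ) (S : Finset (Fin m)) (h : Fin m) (hh : h ∈ S) :
    utilB v p (S.erase h) = utilB v p S - (v S - v (S.erase h)) + p h := by
  simp only [utilB]; rw [Finset.sum_erase_eq_sub hh]; ring

lemma util_lt_erase_of_expensive (hmono : ∀ A B : Finset (Fin m), A ⊆ B → v A ≤ v B)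
    (hempty : v ∅ = 0) (p : Fin m → ℝ) (S : Finset (Fin m)) (h : Fin m) (hh : h ∈ S)
    (hexp : v Finset.univ < p h) :
    utilB v p S < utilB v p (S.erase h) := by
  rw [util_erase v p S h hh]
  have h1 : v S ≤ v Finset.univ := v_le_top v hmono S
  have h2 : 0 ≤ v (S.erase h) := v_nonneg v hmono hempty _
  linarith

lemma notMem_of_dem_expensive (hmono : ∀ A B : Finset (Fin m), A ⊆ B → v A ≤ v B)
    (hempty : v ∅ = 0) (p : Fin m → ℝ) (S : Finset (Fin m)) (h : Fin m)
    (hS : S ∈ DemB v p) (hexp : v Finset.univ < p h) : h ∉ S := by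
  intro hmem
  have := hS (S.erase h)
  have h2 := util_lt_erase_of_expensive v hmono hempty p S h hmem hexp
  linarith

lemma util_eq_of_dem (p : Fin m → ℝ) {S T : Finset (Fin m)}
    (hS : S ∈ DemB v p) (hT : T ∈ DemB v p) : utilB v p S = utilB v p T :=
  le_antisymm (hT S) (hS T)

lemma util_lt_max_of_not_dem (p : Fin m → ℝ) {S T : Finset (Fin m)}
    (hS : S ∈ DemB v p) (hT : T ∉ DemB v p) : utilB v p T < utilB v p S := by
  rcases lt_or_eq_of_le (hS T) with h | h
  · exact h
  · exact absurd (fun T' => h ▸ hS T') hT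

lemma dem_of_max_on_subsets (hmono : ∀ A B : Finset (Fin m), A ⊆ B → v A ≤ v B)
    (hempty : v ∅ = 0) (q : Fin m → ℝ) (X S₀ : Finset (Fin m))
    (hout : ∀ h ∉ X, v Finset.univ < q h)
    (hbest : ∀ T ⊆ X, utilB v q T ≤ utilB v q S₀) : S₀ ∈ DemB v q := by
  intro T
  induction T using Finset.strongInductionOn with
  | _ T ih =>
    by_cases hTX : T ⊆ X
    · exact hbest T hTX
    · obtain ⟨h, hhT, hhX⟩ := Finset.not_subset.mp hTX
      have h1 : utilB v q T < utilB v q (T.erase h) :=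
        util_lt_erase_of_expensive v hmono hempty q T h hhT (hout h hhX)
      have h2 := ih (T.erase h) (Finset.erase_ssubset hhT)
      linarith

lemma sum_ite_zero_of_subset (S X : Finset (Fin m)) (c : ℝ) (hSX : S ⊆ X) :
    ∑ h ∈ S, (if h ∈ X then 0 else c) = 0 := by
  apply Finset.sum_eq_zero; intro h hh; exact if_pos (hSX hh)

lemma sum_ite_mem_card (S Y : Finset (Fin m)) (c : ℝ) :
    ∑ h ∈ S, (if h ∈ Y then c else 0) = c * (S ∩ Y).card := by
  rw [Finset.sum_ite_mem]; simp [Finset.sum_const, mul_comm]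

lemma sum_ite_single (S : Finset (Fin m)) (a : Fin m) (c : ℝ) :
    ∑ h ∈ S, (if h = a then c else 0) = if a ∈ S then c else 0 := by
  simp [Finset.sum_ite_eq']

lemma exists_gap (p : Fin m → ℝ) (X : Finset (Fin m)) (W : ℝ)
    (T₀ : Finset (Fin m)) (hT₀ : T₀ ⊆ X) (hT₀W : utilB v p T₀ < W) :
    ∃ γ > 0, ∀ T ⊆ X, utilB v p T < W → utilB v p T ≤ W - γ := by
  classical
  set F : Finset (Finset (Fin m)) := X.powerset.filter (fun T => utilB v p T < W) with hF
  have hne : F.Nonempty := ⟨T₀, by simp [hF, Finset.mem_powerset, hT₀, hT₀W]⟩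
  set Γ : Finset ℝ := F.image (fun T => W - utilB v p T) with hΓ
  have hΓne : Γ.Nonempty := hne.image _
  refine ⟨Γ.min' hΓne, ?_, ?_⟩
  · obtain ⟨T, hT, hTe⟩ := Finset.mem_image.mp (Γ.min'_mem hΓne)
    have : utilB v p T < W := (Finset.mem_filter.mp hT).2
    rw [← hTe]; linarith
  · intro T hTX hTW
    have hmem : W - utilB v p T ∈ Γ := Finset.mem_image.mpr
      ⟨T, Finset.mem_filter.mpr ⟨Finset.mem_powerset.mpr hTX, hTW⟩, rfl⟩
    have := Γ.min'_le _ hmem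
    linarith

end Helpers

section Club

variable {m : ℕ} (v : Finset (Fin m) → ℝ)

lemma club (hmono : ∀ A B : Finset (Fin m), A ⊆ B → v A ≤ v B) (hempty : v ∅ = 0)
    (hGS : GrossSubstitutes v) (p : Fin m → ℝ) (hp : ∀ h, 0 ≤ p h)
    (M : Finset (Fin m)) (hM : M ∈ DstarB v p) (g : Fin m) (hgM : g ∉ M)
    (A : Finset (Fin m)) (hAM : A ⊆ M) (hAdem : insert g A ∈ DemB v p)
    (h2 : 2 ≤ (M \ A).card) : False := by
  classical
  obtain ⟨a, haMA, b, hbMA, hab⟩ := Finset.one_lt_card.mp h2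
  have haM : a ∈ M := (Finset.mem_sdiff.mp haMA).1
  have haA : a ∉ A := (Finset.mem_sdiff.mp haMA).2
  have hbM : b ∈ M := (Finset.mem_sdiff.mp hbMA).1
  have hbA : b ∉ A := (Finset.mem_sdiff.mp hbMA).2
  have hag : a ≠ g := fun h => hgM (h ▸ haM)
  have hbg : b ≠ g := fun h => hgM (h ▸ hbM)
  set V := v Finset.univ with hV
  have hV0 : 0 ≤ V := v_nonneg v hmono hempty _
  set E₀ : ℝ := V + 1 with hE₀
  set W := utilB v p M with hW
  have hWmax : ∀ T, utilB v p T ≤ W := hM.1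
  have hMb : M.erase b ∉ DemB v p := hM.2 _ (Finset.erase_ssubset hbM)
  have hγ'lt : utilB v p (M.erase b) < W := util_lt_max_of_not_dem v p hM.1 hMb
  set γ' := W - utilB v p (M.erase b) with hγ'
  set X : Finset (Fin m) := insert g M with hX
  have hMX : M ⊆ X := Finset.subset_insert g M
  obtain ⟨γ, hγpos, hγle⟩ := exists_gap v p X W (M.erase b)
    ((Finset.erase_subset b M).trans hMX) hγ'lt
  set δ := min γ γ' with hδ
  have hδpos : 0 < δ := lt_min hγpos (by rw [hγ']; linarith)
  have hδγ : δ ≤ γ := min_le_left _ _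
  have hδγ' : δ ≤ γ' := min_le_right _ _
  -- price increment c₂ and price q₂
  set c₂ : Fin m → ℝ := fun h =>
    (if h ∈ X then 0 else E₀) + ((if h = a then δ/2 else 0) + ((if h = b then δ/2 else 0)
      + (if h = g then δ else 0))) with hc₂
  have hc₂0 : ∀ h, 0 ≤ c₂ h := by
    intro h; simp only [hc₂]; split_ifs <;> linarith
  set q₂ : Fin m → ℝ := fun h => p h + c₂ h with hq₂
  have hq₂0 : ∀ h, 0 ≤ q₂ h := fun h => by
    have := hp h; have := hc₂0 h; simp only [hq₂]; linarith
  have hsum₂ : ∀ S : Finset (Fin m), S ⊆ X → ∑ h ∈ S, c₂ h =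
      (if a ∈ S then δ/2 else 0) + ((if b ∈ S then δ/2 else 0)
        + (if g ∈ S then δ else 0)) := by
    intro S hS
    simp only [hc₂]
    rw [Finset.sum_add_distrib, sum_ite_zero_of_subset S X E₀ hS,
      Finset.sum_add_distrib, Finset.sum_add_distrib,
      sum_ite_single S a (δ/2), sum_ite_single S b (δ/2), sum_ite_single S g δ]
    ring
  have hutil₂ : ∀ S : Finset (Fin m), S ⊆ X → utilB v q₂ S =
      utilB v p S - ((if a ∈ S then δ/2 else 0) + ((if b ∈ S then δ/2 else 0)
        + (if g ∈ S then δ else 0))) := by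
    intro S hS
    rw [hq₂, util_add_prices v p c₂ S, hsum₂ S hS]
  have hutil₂M : utilB v q₂ M = W - δ := by
    rw [hutil₂ M hMX, if_pos haM, if_pos hbM, if_neg hgM, ← hW]; ring
  -- M is demanded at q₂
  have hq₂M : M ∈ DemB v q₂ := by
    apply dem_of_max_on_subsets v hmono hempty q₂ X M
    · intro h hh
      have : c₂ h = E₀ + ((if h = a then δ/2 else 0) + ((if h = b then δ/2 else 0)
          + (if h = g then δ else 0))) := by simp only [hc₂, if_neg hh]
      have h1 : E₀ ≤ c₂ h := by rw [this]; split_ifs <;> linarith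
      have := hp h
      simp only [hq₂]; simp only [hE₀] at h1 ⊢; linarith
    · intro T hTX
      rw [hutil₂ T hTX, hutil₂M]
      rcases lt_or_eq_of_le (hWmax T) with hlt | heq
      · have := hγle T hTX hlt
        split_ifs <;> linarith
      · -- T is demanded
        by_cases hgT : g ∈ T
        · rw [if_pos hgT]; split_ifs <;> linarith
        · have hTM : T ⊆ M := by
            intro h hh
            rcases Finset.mem_insert.mp (hTX hh) with h1 | h1
            · exact absurd (h1 ▸ hh) hgT
            · exact h1
          have hTdem : T ∈ DemB v p := by
            intro T'; exact le_of_le_of_eq (hWmax T') heq.symm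
          have hTeq : T = M := by
            by_contra hne
            exact hM.2 T (Finset.ssubset_def.mpr
              ⟨hTM, fun hsub => hne (Finset.Subset.antisymm hTM hsub)⟩) hTdem
          subst hTeq
          rw [if_pos haM, if_pos hbM, if_neg hgM, heq]; ring_nf; rfl
  -- raise the price of b
  set c₃ : Fin m → ℝ := fun h => if h = b then E₀ else 0 with hc₃
  set q₃ : Fin m → ℝ := fun h => q₂ h + c₃ h with hq₃
  have hq₂q₃ : ∀ h, q₂ h ≤ q₃ h := by
    intro h; simp only [hq₃, hc₃]; split_ifs <;> linarith
  obtain ⟨S', hS', hpers⟩ := hGS q₂ q₃ hq₂0 hq₂q₃ M hq₂M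
  have hMbS' : M.erase b ⊆ S' := by
    intro h hh
    obtain ⟨hhb, hhM⟩ := Finset.mem_erase.mp hh
    refine hpers h hhM ?_
    simp only [hq₃, hc₃, if_neg hhb, add_zero]
  have hout₃ : ∀ h ∉ X, V < q₃ h := by
    intro h hh
    have : c₂ h = E₀ + ((if h = a then δ/2 else 0) + ((if h = b then δ/2 else 0)
        + (if h = g then δ else 0))) := by simp only [hc₂, if_neg hh]
    have h1 : E₀ ≤ c₂ h := by rw [this]; split_ifs <;> linarith
    have h2 := hp h
    have h3 : 0 ≤ c₃ h := by simp only [hc₃]; split_ifs <;> linarith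
    simp only [hq₃, hq₂]; simp only [hE₀] at h1; linarith
  have hbq₃ : V < q₃ b := by
    have h1 := hp b
    have h2 := hc₂0 b
    have h3 : q₃ b = p b + c₂ b + E₀ := by simp [hq₃, hc₃, hq₂]
    rw [h3]; simp only [hE₀]; linarith
  have hbS' : b ∉ S' := notMem_of_dem_expensive v hmono hempty q₃ S' b hS' hbq₃
  have hS'X : S' ⊆ X := by
    intro h hh
    by_contra hhX
    exact notMem_of_dem_expensive v hmono hempty q₃ S' h hS' (hout₃ h hhX) hh
  -- utilities at q₃ of b-free subsets of X
  have hutil₃ : ∀ S : Finset (Fin m), S ⊆ X → b ∉ S → utilB v q₃ S =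
      utilB v p S - ((if a ∈ S then δ/2 else 0) + (if g ∈ S then δ else 0)) := by
    intro S hSX hbS
    rw [hq₃, util_add_prices v q₂ c₃ S]
    have : ∑ h ∈ S, c₃ h = 0 := by
      simp only [hc₃]
      rw [sum_ite_single S b E₀, if_neg hbS]
    rw [this, hutil₂ S hSX, if_neg hbS]
    ring
  -- the contradiction
  have hgA : g ∉ A := fun h => hgM (hAM h)
  have hAX : insert g A ⊆ X := by
    simp only [hX]
    exact Finset.insert_subset_insert g hAM
  have hbgA : b ∉ insert g A := by
    simp only [Finset.mem_insert]; push_neg; exact ⟨hbg, hbA⟩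
  have hagA : a ∉ insert g A := by
    simp only [Finset.mem_insert]; push_neg; exact ⟨hag, haA⟩
  have hWA : utilB v p (insert g A) = W := util_eq_of_dem v p hAdem hM.1
  have hLHS : utilB v q₃ (insert g A) = W - δ := by
    rw [hutil₃ _ hAX hbgA, if_neg hagA, if_pos (Finset.mem_insert_self g A), hWA]
    ring
  have hineq := hS' (insert g A)
  -- identify S'
  have haMb : a ∈ M.erase b := Finset.mem_erase.mpr ⟨hab, haM⟩
  have hgMb : g ∉ M.erase b := fun h => hgM (Finset.mem_of_mem_erase h)
  have hMbX : M.erase b ⊆ X := (Finset.erase_subset b M).trans hMX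
  by_cases hgS' : g ∈ S'
  · have hS'eq : S' = insert g (M.erase b) := by
      apply Finset.Subset.antisymm
      · intro h hh
        rcases Finset.mem_insert.mp (hS'X hh) with h1 | h1
        · rw [h1]; exact Finset.mem_insert_self g _
        · refine Finset.mem_insert_of_mem (Finset.mem_erase.mpr ⟨?_, h1⟩)
          intro hhb; exact hbS' (hhb ▸ hh)
      · exact Finset.insert_subset hgS' hMbS'
    have hbgMb : b ∉ insert g (M.erase b) := by
      simp only [Finset.mem_insert, Finset.mem_erase]; push_neg
      exact ⟨hbg, fun h => absurd rfl h⟩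
    have hXgMb : insert g (M.erase b) ⊆ X :=
      Finset.insert_subset (Finset.mem_insert_self g M) (hMbX.trans (le_refl X))
    have hcond1 : a ∈ insert g (M.erase b) := Finset.mem_insert_of_mem haMb
    have hcond2 : g ∈ insert g (M.erase b) := Finset.mem_insert_self _ _
    have hRHS : utilB v q₃ S' ≤ W - δ/2 - δ := by
      rw [hS'eq, hutil₃ _ hXgMb hbgMb, if_pos hcond1, if_pos hcond2]
      have := hWmax (insert g (M.erase b))
      linarith
    rw [hLHS, hS'eq] at hineq
    rw [hS'eq] at hRHS
    linarith
  · have hS'eq : S' = M.erase b := by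
      apply Finset.Subset.antisymm
      · intro h hh
        rcases Finset.mem_insert.mp (hS'X hh) with h1 | h1
        · exact absurd (h1 ▸ hh) hgS'
        · refine Finset.mem_erase.mpr ⟨?_, h1⟩
          intro hhb; exact hbS' (hhb ▸ hh)
      · exact hMbS'
    have hRHS : utilB v q₃ S' = (W - γ') - δ/2 := by
      rw [hS'eq, hutil₃ _ hMbX (Finset.notMem_erase b M), if_pos haMb, if_neg hgMb]
      rw [hγ']; ring
    rw [hLHS, hRHS] at hineq
    linarith

end Club

section CaseII

variable {m : ℕ} (v : Finset (Fin m) → ℝ)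

lemma caseII_pg0 (hmono : ∀ A B : Finset (Fin m), A ⊆ B → v A ≤ v B) (hempty : v ∅ = 0)
    (hGS : GrossSubstitutes v) (p : Fin m → ℝ) (hp : ∀ h, 0 ≤ p h)
    (M : Finset (Fin m)) (hM : M ∈ DstarB v p) (g : Fin m) (hgM : g ∉ M)
    (B : Finset (Fin m)) (hB : B ∈ DemB v p) (hgB : g ∈ B) (hnd : v (B.erase g) < v B)
    (hpg : p g = 0)
    (hcase : ∀ A ⊆ M, insert g A ∈ DemB v p → A = M) : False := by
  classical
  set V := v Finset.univ with hV
  have hV0 : 0 ≤ V := v_nonneg v hmono hempty _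
  set E₀ : ℝ := V + 1 with hE₀
  set W := utilB v p M with hW
  have hWmax : ∀ T, utilB v p T ≤ W := hM.1
  have huB : utilB v p B = W := (util_eq_of_dem v p hB hM.1).symm ▸ rfl
  have huB' : utilB v p B = W := util_eq_of_dem v p hB hM.1
  have huBg : utilB v p (B.erase g) < W := by
    have h1 := util_erase v p B g hgB
    rw [hpg] at h1
    rw [h1, huB']
    linarith
  -- F8 : the slice below B.erase g is maximized at B.erase g
  have hF8 : ∀ T ⊆ B.erase g, utilB v p T ≤ utilB v p (B.erase g) := by
    set cρ : Fin m → ℝ := fun h => if h ∈ B.erase g then 0 else E₀ with hcρ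
    set ρ : Fin m → ℝ := fun h => p h + cρ h with hρ
    have hpρ : ∀ h, p h ≤ ρ h := by
      intro h; simp only [hρ, hcρ]; split_ifs <;> linarith
    obtain ⟨Ss, hSs, pers⟩ := hGS p ρ hp hpρ B hB
    have hsub : B.erase g ⊆ Ss := by
      intro h hh
      refine pers h (Finset.mem_of_mem_erase hh) ?_
      simp only [hρ, hcρ, if_pos hh, add_zero]
    have hexp : ∀ h ∉ B.erase g, V < ρ h := by
      intro h hh
      have := hp h
      simp only [hρ, hcρ, if_neg hh, hE₀]; linarith
    have hSs2 : Ss ⊆ B.erase g := by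
      intro h hh
      by_contra hhn
      exact notMem_of_dem_expensive v hmono hempty ρ Ss h hSs (hexp h hhn) hh
    have hSseq : Ss = B.erase g := Finset.Subset.antisymm hSs2 hsub
    rw [hSseq] at hSs
    intro T hT
    have h1 : utilB v ρ T = utilB v p T := by
      rw [hρ, util_add_prices v p cρ T, hcρ, sum_ite_zero_of_subset T _ E₀ hT, sub_zero]
    have h2 : utilB v ρ (B.erase g) = utilB v p (B.erase g) := by
      rw [hρ, util_add_prices v p cρ (B.erase g), hcρ,
        sum_ite_zero_of_subset (B.erase g) _ E₀ le_rfl, sub_zero]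
    have := hSs T
    linarith
  -- M cannot fit below B.erase g
  have hMBg : ¬ M ⊆ B.erase g := by
    intro hsub
    have := hF8 M hsub
    rw [← hW] at this
    linarith
  -- gap
  set X₂ : Finset (Fin m) := M ∪ B with hX₂
  have hBX₂ : B ⊆ X₂ := Finset.subset_union_right
  have hMX₂ : M ⊆ X₂ := Finset.subset_union_left
  obtain ⟨γ, hγpos, hγle⟩ := exists_gap v p X₂ W (B.erase g)
    ((Finset.erase_subset g B).trans hBX₂) huBg
  set k : ℕ := (M \ B).card with hk
  have hk0 : (0:ℝ) ≤ (k:ℝ) := Nat.cast_nonneg k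
  obtain ⟨η, hηpos, hkey⟩ : ∃ η : ℝ, 0 < η ∧ η * (k:ℝ) + η = γ/2 := by
    refine ⟨γ / (2*((k:ℝ)+1)), by positivity, ?_⟩
    field_simp
  have hηk : (0:ℝ) ≤ η * (k:ℝ) := mul_nonneg hηpos.le hk0
  -- price q₀
  set c₀ : Fin m → ℝ := fun h =>
    (if h ∈ X₂ then 0 else E₀) + ((if h ∈ M \ B then η else 0)
      + (if h = g then η else 0)) with hc₀
  have hc₀0 : ∀ h, 0 ≤ c₀ h := by
    intro h; simp only [hc₀]; split_ifs <;> linarith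
  set q₀ : Fin m → ℝ := fun h => p h + c₀ h with hq₀
  have hq₀0 : ∀ h, 0 ≤ q₀ h := fun h => by
    have := hp h; have := hc₀0 h; simp only [hq₀]; linarith
  have hutil₀ : ∀ S : Finset (Fin m), S ⊆ X₂ → utilB v q₀ S =
      utilB v p S - (η * ((S ∩ (M \ B)).card : ℝ) + (if g ∈ S then η else 0)) := by
    intro S hS
    rw [hq₀, util_add_prices v p c₀ S]
    simp only [hc₀]
    rw [Finset.sum_add_distrib, sum_ite_zero_of_subset S X₂ E₀ hS,
      Finset.sum_add_distrib, sum_ite_mem_card S (M \ B) η, sum_ite_single S g η]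
    ring
  have hBint : (B ∩ (M \ B)) = ∅ := by
    ext x; simp only [Finset.mem_inter, Finset.mem_sdiff, Finset.notMem_empty,
      iff_false]
    rintro ⟨h1, _, h3⟩; exact h3 h1
  have hutil₀B : utilB v q₀ B = W - η := by
    rw [hutil₀ B hBX₂, hBint, if_pos hgB]
    simp [huB']
  have hq₀B : B ∈ DemB v q₀ := by
    apply dem_of_max_on_subsets v hmono hempty q₀ X₂ B
    · intro h hh
      have h1 : E₀ ≤ c₀ h := by
        simp only [hc₀, if_neg hh]; split_ifs <;> linarith
      have := hp h
      simp only [hq₀]; simp only [hE₀] at h1 ⊢; linarith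
    · intro T hTX
      rw [hutil₀ T hTX, hutil₀B]
      have hpen : (0:ℝ) ≤ η * ((T ∩ (M \ B)).card : ℝ) :=
        mul_nonneg hηpos.le (Nat.cast_nonneg _)
      rcases lt_or_eq_of_le (hWmax T) with hlt | heq
      · have h1 := hγle T hTX hlt
        have h2 : 2*η ≤ γ := by linarith
        split_ifs <;> linarith
      · by_cases hgT : g ∈ T
        · rw [if_pos hgT]; linarith
        · rw [if_neg hgT]
          have hne : (T ∩ (M \ B)).Nonempty := by
            rw [Finset.nonempty_iff_ne_empty]
            intro hemp
            have hTsub : T ⊆ B.erase g := by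
              intro h hh
              have hx : h ∈ X₂ := hTX hh
              have hB' : h ∈ B := by
                rcases Finset.mem_union.mp hx with h1 | h1
                · by_contra hhB
                  have : h ∈ T ∩ (M \ B) := Finset.mem_inter.mpr
                    ⟨hh, Finset.mem_sdiff.mpr ⟨h1, hhB⟩⟩
                  rw [hemp] at this
                  exact absurd this (Finset.notMem_empty h)
                · exact h1
              exact Finset.mem_erase.mpr ⟨fun hhg => hgT (hhg ▸ hh), hB'⟩
            have := hF8 T hTsub
            linarith
          have hge1 : (1:ℝ) ≤ ((T ∩ (M \ B)).card : ℝ) := by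
            exact_mod_cast Nat.one_le_iff_ne_zero.mpr
              (Finset.card_ne_zero_of_mem hne.choose_spec)
          have := mul_le_mul_of_nonneg_left hge1 hηpos.le
          linarith
  -- raise prices of B \ insert g M
  set X : Finset (Fin m) := insert g M with hXX
  set c₁ : Fin m → ℝ := fun h => if h ∈ B \ X then E₀ else 0 with hc₁
  set q₁ : Fin m → ℝ := fun h => q₀ h + c₁ h with hq₁
  have hq₀q₁ : ∀ h, q₀ h ≤ q₁ h := by
    intro h; simp only [hq₁, hc₁]; split_ifs <;> linarith
  obtain ⟨S', hS', pers⟩ := hGS q₀ q₁ hq₀0 hq₀q₁ B hq₀B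
  have hgS' : g ∈ S' := by
    refine pers g hgB ?_
    have : g ∉ B \ X := by
      simp only [Finset.mem_sdiff, hXX]
      push_neg
      intro _; exact Finset.mem_insert_self g M
    simp only [hq₁, hc₁, if_neg this, add_zero]
  have hS'X : S' ⊆ X := by
    intro h hh
    by_contra hhX
    have hexp : V < q₁ h := by
      by_cases hhB : h ∈ B
      · have : h ∈ B \ X := Finset.mem_sdiff.mpr ⟨hhB, hhX⟩
        have h1 := hq₀0 h
        simp only [hq₁, hc₁, if_pos this]
        simp only [hE₀] at *; linarith
      · have hhX₂ : h ∉ X₂ := by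
          simp only [hX₂, Finset.mem_union]
          push_neg
          refine ⟨fun hhM => hhX ?_, hhB⟩
          exact Finset.mem_insert_of_mem hhM
        have h1 : E₀ ≤ c₀ h := by
          simp only [hc₀, if_neg hhX₂]; split_ifs <;> linarith
        have h2 := hp h
        have h3 : 0 ≤ c₁ h := by simp only [hc₁]; split_ifs <;> linarith
        simp only [hq₁, hq₀]; simp only [hE₀] at h1 ⊢; linarith
    exact notMem_of_dem_expensive v hmono hempty q₁ S' h hS' hexp hh
  have hXX₂ : X ⊆ X₂ := by
    intro h hh
    rcases Finset.mem_insert.mp hh with h1 | h1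
    · exact h1 ▸ hBX₂ hgB
    · exact hMX₂ h1
  have hutil₁ : ∀ S : Finset (Fin m), S ⊆ X → utilB v q₁ S =
      utilB v p S - (η * ((S ∩ (M \ B)).card : ℝ) + (if g ∈ S then η else 0)) := by
    intro S hSX
    have h0 : ∑ h ∈ S, c₁ h = 0 := by
      apply Finset.sum_eq_zero
      intro h hh
      have : h ∉ B \ X := by
        simp only [Finset.mem_sdiff]; push_neg; intro _; exact hSX hh
      simp only [hc₁, if_pos, this, if_neg this]
    rw [hq₁, util_add_prices v q₀ c₁ S, h0, sub_zero, hutil₀ S (hSX.trans hXX₂)]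
  have hMint : (M ∩ (M \ B)) = M \ B := Finset.inter_eq_right.mpr Finset.sdiff_subset
  have hutil₁M : utilB v q₁ M = W - η * (k:ℝ) := by
    rw [hutil₁ M (Finset.subset_insert g M), hMint, if_neg hgM, ← hW, ← hk]
    ring
  have hfin := hS' M
  rw [hutil₁M] at hfin
  rcases lt_or_eq_of_le (hWmax S') with hlt | heq
  · have h1 := hγle S' (hS'X.trans hXX₂) hlt
    have h2 : utilB v q₁ S' ≤ utilB v p S' := by
      rw [hutil₁ S' hS'X]
      have hpen : (0:ℝ) ≤ η * ((S' ∩ (M \ B)).card : ℝ) :=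
        mul_nonneg hηpos.le (Nat.cast_nonneg _)
      split_ifs <;> linarith
    linarith
  · -- S' is demanded at p, contains g, inside insert g M: so S' = insert g M
    have hS'dem : S' ∈ DemB v p := fun T' => le_of_le_of_eq (hWmax T') heq.symm
    have hA'sub : S'.erase g ⊆ M := by
      intro h hh
      obtain ⟨hhg, hhS⟩ := Finset.mem_erase.mp hh
      rcases Finset.mem_insert.mp (hS'X hhS) with h1 | h1
      · exact absurd h1 hhg
      · exact h1
    have hins : insert g (S'.erase g) = S' := Finset.insert_erase hgS'
    have hA'eq : S'.erase g = M := hcase _ hA'sub (by rw [hins]; exact hS'dem)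
    have hS'eq : S' = insert g M := by rw [← hins, hA'eq]
    have hgMB : g ∉ M \ B := by
      simp only [Finset.mem_sdiff]; push_neg; intro h; exact absurd h hgM
    have hint : (insert g M) ∩ (M \ B) = M \ B := by
      rw [Finset.insert_inter_of_notMem hgMB, hMint]
    have hc : utilB v p (insert g M) = W := by rw [← hS'eq]; exact heq
    have hsubX : insert g M ⊆ X := by rw [hXX]
    have hval : utilB v q₁ S' = W - η * (k:ℝ) - η := by
      rw [hS'eq, hutil₁ _ hsubX, hint, if_pos (Finset.mem_insert_self g M), hc, hk]
      ring
    rw [hval] at hfin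
    linarith

end CaseII

section Edge

variable {m : ℕ} (v : Finset (Fin m) → ℝ)

lemma edge_exists (hmono : ∀ A B : Finset (Fin m), A ⊆ B → v A ≤ v B) (hempty : v ∅ = 0)
    (hGS : GrossSubstitutes v) (p : Fin m → ℝ) (hp : ∀ h, 0 ≤ p h)
    (M : Finset (Fin m)) (hM : M ∈ DstarB v p) (g : Fin m) (hgM : g ∉ M)
    (B : Finset (Fin m)) (hB : B ∈ DemB v p) (hgB : g ∈ B) (hnd : v (B.erase g) < v B) :
    (∃ a ∈ M, (∃ C ∈ DstarB v p, g ∈ C) ∧ (insert g M).erase a ∈ DstarB v p) ∨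
    (0 < p g ∧ ∃ B' ∈ DemB v p, g ∈ B' ∧ B'.erase g ∈ DstarB v p) := by
  classical
  set V := v Finset.univ with hV
  have hV0 : 0 ≤ V := v_nonneg v hmono hempty _
  set E₀ : ℝ := V + 1 with hE₀
  set X : Finset (Fin m) := insert g M with hX
  have hgX : g ∈ X := Finset.mem_insert_self g M
  have hMX : M ⊆ X := Finset.subset_insert g M
  set cr : Fin m → ℝ := fun h => if h ∈ X then 0 else E₀ with hcr
  set r : Fin m → ℝ := fun h => p h + cr h with hr
  have hpr : ∀ h, p h ≤ r h := by
    intro h; simp only [hr, hcr]; split_ifs <;> linarith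
  have hrutil : ∀ S : Finset (Fin m), S ⊆ X → utilB v r S = utilB v p S := by
    intro S hS
    rw [hr, util_add_prices v p cr S, hcr, sum_ite_zero_of_subset S X E₀ hS, sub_zero]
  obtain ⟨S₁, hS₁r, pers⟩ := hGS p r hp hpr B hB
  have hgS₁ : g ∈ S₁ := by
    refine pers g hgB ?_
    simp only [hr, hcr, if_pos hgX, add_zero]
  have hS₁X : S₁ ⊆ X := by
    intro h hh
    by_contra hhX
    have hexp : V < r h := by
      have := hp h
      simp only [hr, hcr, if_neg hhX, hE₀]; linarith
    exact notMem_of_dem_expensive v hmono hempty r S₁ h hS₁r hexp hh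
  have hS₁p : S₁ ∈ DemB v p := by
    intro T
    have h1 : utilB v p T ≤ utilB v p M := hM.1 T
    have h2 : utilB v r M ≤ utilB v r S₁ := hS₁r M
    rw [hrutil M hMX, hrutil S₁ hS₁X] at h2
    linarith
  by_cases hI : ∃ A, A ⊆ M ∧ insert g A ∈ DemB v p ∧ A ≠ M
  · -- Case I : a strict swap exists
    obtain ⟨A, hAM, hAdem, hAne⟩ := hI
    have hgA : g ∉ A := fun h => hgM (hAM h)
    have hne : (M \ A).Nonempty :=
      Finset.sdiff_nonempty.mpr (fun hsub => hAne (Finset.Subset.antisymm hAM hsub))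
    have hcard : (M \ A).card = 1 := by
      have h1 : 1 ≤ (M \ A).card := Finset.card_pos.mpr hne
      have h2 : (M \ A).card ≤ 1 := by
        by_contra hgt
        push_neg at hgt
        exact club v hmono hempty hGS p hp M hM g hgM A hAM hAdem hgt
      omega
    obtain ⟨a, ha⟩ := Finset.card_eq_one.mp hcard
    have haMA : a ∈ M \ A := by rw [ha]; exact Finset.mem_singleton_self a
    have haM : a ∈ M := (Finset.mem_sdiff.mp haMA).1
    have haA : a ∉ A := (Finset.mem_sdiff.mp haMA).2
    have hag : a ≠ g := fun h => hgM (h ▸ haM)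
    have hins : (insert g M).erase a = insert g A := by
      ext h
      simp only [Finset.mem_erase, Finset.mem_insert]
      constructor
      · rintro ⟨hha, hgg | hhM⟩
        · exact Or.inl hgg
        · refine Or.inr ?_
          by_contra hhA
          have : h ∈ M \ A := Finset.mem_sdiff.mpr ⟨hhM, hhA⟩
          rw [ha] at this
          exact hha (Finset.mem_singleton.mp this)
      · rintro (hgg | hhA)
        · exact ⟨hgg ▸ hag.symm, Or.inl hgg⟩
        · exact ⟨fun hha => haA (hha ▸ hhA), Or.inr (hAM hhA)⟩
    have hDstar : insert g A ∈ DstarB v p := by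
      refine ⟨hAdem, ?_⟩
      intro T hT hTdem
      by_cases hgT : g ∈ T
      · have hA'A : T.erase g ⊆ A := by
          intro h hh
          obtain ⟨hhg, hhT⟩ := Finset.mem_erase.mp hh
          rcases Finset.mem_insert.mp (hT.subset hhT) with h1 | h1
          · exact absurd h1 hhg
          · exact h1
        have hTA : T = insert g (T.erase g) := (Finset.insert_erase hgT).symm
        have hA'ne : T.erase g ≠ A := by
          intro hEq
          exact hT.ne (by rw [hTA, hEq])
        have hA'ss : T.erase g ⊂ A := Finset.ssubset_def.mpr
          ⟨hA'A, fun hsub => hA'ne (Finset.Subset.antisymm hA'A hsub)⟩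
        obtain ⟨x, hxA, hxA'⟩ := Finset.exists_of_ssubset hA'ss
        have hax : a ≠ x := fun h => haA (h ▸ hxA)
        have hpair : 2 ≤ (M \ T.erase g).card := by
          have hsub : ({a, x} : Finset (Fin m)) ⊆ M \ T.erase g := by
            intro y hy
            rcases Finset.mem_insert.mp hy with h1 | h1
            · subst h1
              refine Finset.mem_sdiff.mpr ⟨haM, fun hmem => haA (hA'A hmem)⟩
            · have : y = x := Finset.mem_singleton.mp h1
              subst this
              exact Finset.mem_sdiff.mpr ⟨hAM hxA, hxA'⟩
          calc 2 = ({a, x} : Finset (Fin m)).card := (Finset.card_pair hax).symm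
            _ ≤ _ := Finset.card_le_card hsub
        exact club v hmono hempty hGS p hp M hM g hgM (T.erase g)
          (hA'A.trans hAM) (by rw [← hTA]; exact hTdem) hpair
      · have hTM : T ⊂ M := by
          have hTA : T ⊆ A := by
            intro h hh
            rcases Finset.mem_insert.mp (hT.subset hh) with h1 | h1
            · exact absurd (h1 ▸ hh) hgT
            · exact h1
          refine Finset.ssubset_def.mpr ⟨hTA.trans hAM, fun hsub => ?_⟩
          exact haA (hTA (hsub haM))
        exact hM.2 T hTM hTdem
    exact Or.inl ⟨a, haM, ⟨insert g A, hDstar, Finset.mem_insert_self g A⟩,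
      by rw [hins]; exact hDstar⟩
  · -- Case II
    push_neg at hI
    have hS₁eq : S₁ = insert g M := by
      have hsub : S₁.erase g ⊆ M := by
        intro h hh
        obtain ⟨hhg, hhS⟩ := Finset.mem_erase.mp hh
        rcases Finset.mem_insert.mp (hS₁X hhS) with h1 | h1
        · exact absurd h1 hhg
        · exact h1
      have := hI (S₁.erase g) hsub (by rw [Finset.insert_erase hgS₁]; exact hS₁p)
      rw [← Finset.insert_erase hgS₁, this]
    by_cases hpg : 0 < p g
    · refine Or.inr ⟨hpg, insert g M, ?_, Finset.mem_insert_self g M, ?_⟩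
      · rw [← hS₁eq]; exact hS₁p
      · rw [Finset.erase_insert hgM]; exact hM
    · have hpg0 : p g = 0 := le_antisymm (not_lt.mp hpg) (hp g)
      exact (caseII_pg0 v hmono hempty hGS p hp M hM g hgM B hB hgB hnd hpg0 hI).elim

end Edge


/-- for gross substitutes buyers at a minimal Walrasian equilibrium
`(p, μ)`, with minimum demand bundles `M q ⊆ μ q`, if the buyer in-degree of good `g`
in the swap graph is at most `d`, then the non-degenerate over-demand of `g` is at most
`d`: at most `s g + d` buyers demand `g` in some non-degenerate bundle. -/
theorem stmt16 (n m : ℕ) (s : Fin m → ℕ) (hs : ∀ g, 1 ≤ s g)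
    (v : Fin n → Finset (Fin m) → ℝ)
    (hmono : ∀ q, ∀ A B : Finset (Fin m), A ⊆ B → v q A ≤ v q B)
    (hempty : ∀ q, v q ∅ = 0)
    (hGS : ∀ q, GrossSubstitutes (v q))
    (p : Fin m → ℝ) (μ : Fin n → Finset (Fin m))
    (hWE : IsWEB s v p μ) (hmin : IsMinimalWEPriceB s v p)
    (M : Fin n → Finset (Fin m))
    (hM : ∀ q, M q ∈ DstarB (v q) p ∧ M q ⊆ μ q)
    (g : Fin m) (d : ℕ)
    (hdeg : Nat.card {q : Fin n // BuyerEdgeInto v p μ M q g} ≤ d) :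
    Nat.card {q : Fin n // ∃ B ∈ DemB (v q) p, NonDegen (v q) B ∧ g ∈ B} ≤ s g + d := by
  classical
  have hp0 : ∀ h, 0 ≤ p h := hmin.1
  have key : ∀ q, (∃ B ∈ DemB (v q) p, NonDegen (v q) B ∧ g ∈ B) → g ∉ μ q →
      BuyerEdgeInto v p μ M q g := by
    intro q hq hgμ
    obtain ⟨B, hB, hndB, hgB⟩ := hq
    have hgMq : g ∉ M q := fun h => hgμ ((hM q).2 h)
    rcases edge_exists (v q) (hmono q) (hempty q) (hGS q) p hp0 (M q) (hM q).1 g hgMq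
      B hB hgB (hndB g hgB) with h | h
    · obtain ⟨a, haM, hC, hD⟩ := h
      exact Or.inl ⟨a, haM, hgμ, hC, hD⟩
    · obtain ⟨hpg, B', hB', hgB', hD⟩ := h
      exact Or.inr ⟨hgμ, hpg, B', hB', hgB', hD⟩
  have hcard1 : Nat.card {q : Fin n // ∃ B ∈ DemB (v q) p, NonDegen (v q) B ∧ g ∈ B}
      = (univ.filter fun q => ∃ B ∈ DemB (v q) p, NonDegen (v q) B ∧ g ∈ B).card := by
    rw [Nat.card_eq_fintype_card, Fintype.card_subtype]
  have hcard2 : (univ.filter fun q => BuyerEdgeInto v p μ M q g).card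
      = Nat.card {q : Fin n // BuyerEdgeInto v p μ M q g} := by
    rw [Nat.card_eq_fintype_card, Fintype.card_subtype]
  have hsub : (univ.filter fun q => ∃ B ∈ DemB (v q) p, NonDegen (v q) B ∧ g ∈ B) ⊆
      (univ.filter fun q => g ∈ μ q) ∪ (univ.filter fun q => BuyerEdgeInto v p μ M q g) := by
    intro q hq
    have hPq := (Finset.mem_filter.mp hq).2
    by_cases hgμ : g ∈ μ q
    · exact Finset.mem_union_left _ (Finset.mem_filter.mpr ⟨Finset.mem_univ q, hgμ⟩)
    · exact Finset.mem_union_right _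
        (Finset.mem_filter.mpr ⟨Finset.mem_univ q, key q hPq hgμ⟩)
  calc Nat.card {q : Fin n // ∃ B ∈ DemB (v q) p, NonDegen (v q) B ∧ g ∈ B}
      = (univ.filter fun q => ∃ B ∈ DemB (v q) p, NonDegen (v q) B ∧ g ∈ B).card := hcard1
    _ ≤ ((univ.filter fun q => g ∈ μ q)
          ∪ (univ.filter fun q => BuyerEdgeInto v p μ M q g)).card :=
        Finset.card_le_card hsub
    _ ≤ (univ.filter fun q => g ∈ μ q).card
          + (univ.filter fun q => BuyerEdgeInto v p μ M q g).card :=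
        Finset.card_union_le _ _
    _ ≤ s g + d := add_le_add (hWE.1 g) (by rw [hcard2]; exact hdeg)

end
end
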